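/- arXiv:2409.20440 — 6 statements merged into one kernel-verified Lean document; each statement's English description precedes it below -/
import Mathlib

section
/- Let K ≥ 1 and let F_1,…,F_K : ℝ → [0,1] be cumulative distribution functions, each continuous, each strictly increasing at every point s with F_k(s) ∈ (0,1), and each with finite first moment. Let B be the marginal ambiguity set induced by F_1,…,F_K. Then for every u ∈ ℝ^K the supremum defining Φ(u;B) is finite and Φ(u;B) = max_{p ∈ Δ^K} [ Σ_{k=1}^K u_k p_k + Σ_{k=1}^K ∫_{1−p_k}^1 F_k^{-1}(t) dt ], where the maximum over the simplex is attained. -/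
open MeasureTheory Set Filter

noncomputable def simplex (K : ℕ) : Set (Fin K → ℝ) :=
  {p | (∀ k, 0 ≤ p k) ∧ ∑ k, p k = 1}

noncomputable def quantile (F : ℝ → ℝ) (s : ℝ) : ℝ := sInf {t | s ≤ F t}

noncomputable def dopaObj {K : ℕ} (F : Fin K → ℝ → ℝ) (u p : Fin K → ℝ) : ℝ :=
  ∑ k, u k * p k + ∑ k, ∫ t in (1 - p k)..1, quantile (F k) t

def marginalSet {K : ℕ} (F : Fin K → ℝ → ℝ) : Set (Measure (Fin K → ℝ)) :=
  {Q | IsProbabilityMeasure Q ∧ ∀ k s, Q {z | z k ≤ s} = ENNReal.ofReal (F k s)}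

noncomputable def PhiSet {K : ℕ} (F : Fin K → ℝ → ℝ) (u : Fin K → ℝ) : Set ℝ :=
  {x | ∃ Q ∈ marginalSet F, x = ∫ z, (⨆ k, u k + z k) ∂Q}

/-!
For a threshold `t`, pointwise `⨆ k, (u k + z k) ≤ t + ∑ k, (z k - (t - u k))⁺`, and the
expectation of the right side only depends on the marginals:
`E (z k - c)⁺ = ∫ s in F k c..1, (quantile (F k) s - c)`. Choosing `t` with
`∑ k, (1 - F k (t - u k)) = 1` (intermediate value theorem, `K ≥ 2`) and
`p k = 1 - F k (t - u k)`, this upper bound becomes `dopaObj F u p`.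

Conversely, for every `p` in the simplex, cut `(0, 1)` into consecutive blocks of lengths `p k` and
build a coupling from one uniform variable, rotating it separately in each coordinate. Rotations
preserve the uniform law, so the marginals are right, and bounding the maximum below by the `k`-th
coordinate on the `k`-th block gives an expectation of at least `dopaObj F u p`. So the `p` above
maximizes `dopaObj F u` on the simplex, and its value is the supremum.
-/

open scoped Topology

structure IsContinuousCDF (F : ℝ → ℝ) : Prop where
  monotone : Monotone F
  continuous : Continuous F
  tendsto_atBot : Tendsto F atBot (𝓝 0)
  tendsto_atTop : Tendsto F atTop (𝓝 1)

namespace IsContinuousCDF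

variable {F : ℝ → ℝ} (hF : IsContinuousCDF F) {s x : ℝ}
include hF

theorem mem_Icc (x : ℝ) : F x ∈ Icc (0 : ℝ) 1 :=
  ⟨hF.monotone.le_of_tendsto hF.tendsto_atBot x, hF.monotone.ge_of_tendsto hF.tendsto_atTop x⟩

theorem bddBelow_setOf_le (hs : 0 < s) : BddBelow {t | s ≤ F t} := by
  obtain ⟨t₀, ht₀⟩ := (hF.tendsto_atBot.eventually (eventually_lt_nhds hs)).exists
  exact ⟨t₀, fun t ht => le_of_not_gt fun htt₀ =>
    (ht.trans (hF.monotone htt₀.le)).not_gt ht₀⟩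

theorem le_apply_quantile (hs : s ∈ Ioo (0 : ℝ) 1) : s ≤ F (quantile F s) :=
  (isClosed_Ici.preimage hF.continuous).csInf_mem
    (hF.tendsto_atTop.eventually (eventually_ge_nhds hs.2)).exists (hF.bddBelow_setOf_le hs.1)

theorem quantile_le_iff (hs : s ∈ Ioo (0 : ℝ) 1) : quantile F s ≤ x ↔ s ≤ F x :=
  ⟨fun h => (hF.le_apply_quantile hs).trans (hF.monotone h),
    fun h => csInf_le (hF.bddBelow_setOf_le hs.1) h⟩

theorem lt_quantile_iff (hs : s ∈ Ioo (0 : ℝ) 1) : x < quantile F s ↔ F x < s := by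
  simpa only [not_le] using (hF.quantile_le_iff hs).not

theorem monotoneOn_quantile : MonotoneOn (quantile F) (Ioo 0 1) := fun _ hs _ ht hst =>
  (hF.quantile_le_iff hs).2 (hst.trans (hF.le_apply_quantile ht))

theorem aemeasurable_quantile : AEMeasurable (quantile F) (volume.restrict (Ioo 0 1)) :=
  aemeasurable_restrict_of_monotoneOn measurableSet_Ioo hF.monotoneOn_quantile

end IsContinuousCDF

instance : IsProbabilityMeasure (volume.restrict (Ioo (0 : ℝ) 1)) :=
  ⟨by simp⟩

theorem volume_restrict_Ioo_Iic {y : ℝ} (hy : y ≤ 1) :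
    volume.restrict (Ioo (0 : ℝ) 1) (Iic y) = ENNReal.ofReal y := by
  rw [Measure.restrict_apply measurableSet_Iic]
  refine le_antisymm ?_ ?_
  · calc volume (Iic y ∩ Ioo 0 1) ≤ volume (Ioc 0 y) :=
          measure_mono fun t ht => ⟨ht.2.1, ht.1⟩
      _ = ENNReal.ofReal y := by rw [Real.volume_Ioc, sub_zero]
  · calc ENNReal.ofReal y = volume (Ioo 0 y) := by rw [Real.volume_Ioo, sub_zero]
      _ ≤ volume (Iic y ∩ Ioo 0 1) :=
          measure_mono fun t ht => ⟨ht.2.le, ht.1, ht.2.trans_le hy⟩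

theorem IsContinuousCDF.map_quantile_Iic {F : ℝ → ℝ} (hF : IsContinuousCDF F) (x : ℝ) :
    (volume.restrict (Ioo (0 : ℝ) 1)).map (quantile F) (Iic x) = ENNReal.ofReal (F x) := by
  rw [Measure.map_apply_of_aemeasurable hF.aemeasurable_quantile measurableSet_Iic,
    ← volume_restrict_Ioo_Iic (hF.mem_Icc x).2, Measure.restrict_apply' measurableSet_Ioo,
    Measure.restrict_apply' measurableSet_Ioo]
  congr 1
  ext s
  exact and_congr_left (hF.quantile_le_iff ·)

theorem IsContinuousCDF.setIntegral_max_quantile_sub {F : ℝ → ℝ} (hF : IsContinuousCDF F)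
    (hq : IntegrableOn (quantile F) (Ioo 0 1)) (c : ℝ) :
    ∫ s in Ioo 0 1, max (quantile F s - c) 0 =
      (∫ s in (F c)..1, quantile F s) - (1 - F c) * c := by
  have hFc := hF.mem_Icc c
  have hpointwise : EqOn (fun s => max (quantile F s - c) 0)
      ((Ioi (F c)).indicator fun s => quantile F s - c) (Ioo 0 1) := fun s hs => by
    dsimp only
    by_cases hcs : F c < s
    · rw [indicator_of_mem (mem_Ioi.2 hcs),
        max_eq_left (sub_nonneg.2 ((hF.lt_quantile_iff hs).2 hcs).le)]
    · rw [indicator_of_notMem (mt mem_Ioi.1 hcs),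
        max_eq_right (sub_nonpos.2 ((hF.quantile_le_iff hs).2 (not_lt.1 hcs)))]
  rw [setIntegral_congr_fun measurableSet_Ioo hpointwise,
    setIntegral_indicator measurableSet_Ioi, Ioo_inter_Ioi, max_eq_right hFc.1,
    integral_sub (hq.mono_set (Ioo_subset_Ioo_left hFc.1)) (integrableOn_const (by simp)),
    intervalIntegral.integral_of_le hFc.2, integral_Ioc_eq_integral_Ioo, setIntegral_const,
    Real.volume_real_Ioo_of_le hFc.2, smul_eq_mul]

theorem abs_ciSup_le_sum_abs {ι : Type*} [Fintype ι] (f : ι → ℝ) :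
    |⨆ i, f i| ≤ ∑ i, |f i| := by
  cases isEmpty_or_nonempty ι
  · simp
  have hle : ∀ i, |f i| ≤ ∑ j, |f j| := fun i =>
    Finset.single_le_sum (fun j _ => abs_nonneg (f j)) (Finset.mem_univ i)
  obtain ⟨i⟩ := ‹Nonempty ι›
  exact abs_le.2 ⟨(neg_le_neg (hle i)).trans ((neg_abs_le _).trans
    (le_ciSup (Set.finite_range f).bddAbove i)), ciSup_le fun j => (le_abs_self _).trans (hle j)⟩

theorem ciSup_add_le_add_sum_max_sub {ι : Type*} [Fintype ι] [Nonempty ι] (u z : ι → ℝ)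
    (t : ℝ) : ⨆ k, u k + z k ≤ t + ∑ k, max (z k - (t - u k)) 0 :=
  ciSup_le fun k => calc
    u k + z k = t + (z k - (t - u k)) := by ring
    _ ≤ t + max (z k - (t - u k)) 0 := by gcongr; exact le_max_left _ _
    _ ≤ t + ∑ j, max (z j - (t - u j)) 0 := by
      gcongr
      exact Finset.single_le_sum (f := fun j => max (z j - (t - u j)) 0)
        (fun j _ => le_max_right _ _) (Finset.mem_univ k)

section Marginals

variable {K : ℕ} {F : Fin K → ℝ → ℝ} (hF : ∀ k, IsContinuousCDF (F k))
  {Q : Measure (Fin K → ℝ)} (hQ : Q ∈ marginalSet F) (k : Fin K)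
include hF hQ

theorem map_eval_of_mem_marginalSet :
    Q.map (fun z => z k) = (volume.restrict (Ioo (0 : ℝ) 1)).map (quantile (F k)) := by
  have := hQ.1
  have := Measure.isProbabilityMeasure_map (μ := volume.restrict (Ioo (0 : ℝ) 1))
    (hF k).aemeasurable_quantile
  refine Measure.ext_of_Iic _ _ fun x => ?_
  rw [Measure.map_apply (measurable_pi_apply k) measurableSet_Iic, (hF k).map_quantile_Iic]
  exact hQ.2 k x

theorem integral_comp_eval_of_mem_marginalSet {g : ℝ → ℝ} (hg : Measurable g) :
    ∫ z, g (z k) ∂Q = ∫ s in Ioo 0 1, g (quantile (F k) s) := by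
  rw [← integral_map (measurable_pi_apply k).aemeasurable hg.aestronglyMeasurable,
    map_eval_of_mem_marginalSet hF hQ,
    integral_map (hF k).aemeasurable_quantile hg.aestronglyMeasurable]

theorem integrable_comp_eval_iff_of_mem_marginalSet {g : ℝ → ℝ} (hg : Measurable g) :
    Integrable (fun z => g (z k)) Q ↔ IntegrableOn (fun s => g (quantile (F k) s)) (Ioo 0 1) := by
  have h := integrable_map_measure (μ := Q) hg.aestronglyMeasurable
    (measurable_pi_apply k).aemeasurable
  rw [map_eval_of_mem_marginalSet hF hQ,
    integrable_map_measure hg.aestronglyMeasurable (hF k).aemeasurable_quantile] at h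
  exact h.symm

end Marginals

section UpperBound

variable {K : ℕ} {F : Fin K → ℝ → ℝ} (hF : ∀ k, IsContinuousCDF (F k))
  (hq : ∀ k, IntegrableOn (quantile (F k)) (Ioo 0 1))
include hF hq

theorem integrable_eval_of_mem_marginalSet {Q : Measure (Fin K → ℝ)} (hQ : Q ∈ marginalSet F)
    (k : Fin K) : Integrable (fun z => z k) Q :=
  (integrable_comp_eval_iff_of_mem_marginalSet hF hQ k measurable_id).2 (hq k)

theorem integrable_ciSup_add_of_mem_marginalSet {Q : Measure (Fin K → ℝ)}
    (hQ : Q ∈ marginalSet F) (u : Fin K → ℝ) : Integrable (fun z => ⨆ k, u k + z k) Q := by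
  have := hQ.1
  have habs (k : Fin K) : Integrable (fun z => |u k + z k|) Q :=
    ((integrable_const (u k)).add (integrable_eval_of_mem_marginalSet hF hq hQ k)).abs
  refine (integrable_finsetSum Finset.univ fun k _ => habs k).mono'
    (Measurable.iSup fun k => measurable_const.add (measurable_pi_apply k)).aestronglyMeasurable
    (ae_of_all _ fun z => ?_)
  simpa only [Real.norm_eq_abs] using abs_ciSup_le_sum_abs _

theorem integral_ciSup_add_le_dopaObj [Nonempty (Fin K)] {Q : Measure (Fin K → ℝ)}
    (hQ : Q ∈ marginalSet F) (u : Fin K → ℝ) {t : ℝ} (ht : ∑ k, (1 - F k (t - u k)) = 1) :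
    ∫ z, ⨆ k, u k + z k ∂Q ≤ dopaObj F u (fun k => 1 - F k (t - u k)) := by
  have := hQ.1
  have hpos (k : Fin K) : Integrable (fun z => max (z k - (t - u k)) 0) Q :=
    ((integrable_eval_of_mem_marginalSet hF hq hQ k).sub (integrable_const _)).pos_part
  have hsum : Integrable (fun z => ∑ k, max (z k - (t - u k)) 0) Q :=
    integrable_finsetSum Finset.univ fun k _ => hpos k
  have hstopLoss (k : Fin K) : ∫ z, max (z k - (t - u k)) 0 ∂Q
      = (∫ s in (F k (t - u k))..1, quantile (F k) s) - (1 - F k (t - u k)) * (t - u k) := by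
    rw [integral_comp_eval_of_mem_marginalSet hF hQ k (g := fun x => max (x - (t - u k)) 0)
      (by fun_prop), (hF k).setIntegral_max_quantile_sub (hq k)]
  have hweights : ∑ k, (1 - F k (t - u k)) * (t - u k)
      = t - ∑ k, u k * (1 - F k (t - u k)) :=
    calc ∑ k, (1 - F k (t - u k)) * (t - u k)
        = (∑ k, (1 - F k (t - u k))) * t - ∑ k, u k * (1 - F k (t - u k)) := by
          rw [Finset.sum_mul, ← Finset.sum_sub_distrib]
          exact Finset.sum_congr rfl fun k _ => by ring
      _ = t - ∑ k, u k * (1 - F k (t - u k)) := by rw [ht, one_mul]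
  calc ∫ z, ⨆ k, u k + z k ∂Q ≤ ∫ z, (t + ∑ k, max (z k - (t - u k)) 0) ∂Q :=
        integral_mono (integrable_ciSup_add_of_mem_marginalSet hF hq hQ u)
          ((integrable_const t).add hsum) fun z => ciSup_add_le_add_sum_max_sub u z t
    _ = t + ∑ k, ((∫ s in (F k (t - u k))..1, quantile (F k) s)
          - (1 - F k (t - u k)) * (t - u k)) := by
        rw [integral_add (integrable_const t) hsum,
          integral_finsetSum Finset.univ fun k _ => hpos k]
        simp [hstopLoss]
    _ = dopaObj F u (fun k => 1 - F k (t - u k)) := by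
        rw [Finset.sum_sub_distrib, hweights, dopaObj]
        simp only [sub_sub_cancel]
        ring

omit hq in
theorem exists_sum_one_sub_eq_one (hK : 1 < K) (u : Fin K → ℝ) :
    ∃ t, ∑ k, (1 - F k (t - u k)) = 1 := by
  have hcont : Continuous fun t => ∑ k, (1 - F k (t - u k)) :=
    continuous_finsetSum _ fun k _ => continuous_const.sub ((hF k).continuous.comp
      (continuous_sub_right _))
  have hbot : Tendsto (fun t => ∑ k, (1 - F k (t - u k))) atBot
      (𝓝 (∑ _k : Fin K, (1 - 0))) :=
    tendsto_finsetSum _ fun k _ => tendsto_const_nhds.sub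
      ((hF k).tendsto_atBot.comp (tendsto_atBot_add_const_right _ (-u k) tendsto_id))
  have htop : Tendsto (fun t => ∑ k, (1 - F k (t - u k))) atTop
      (𝓝 (∑ _k : Fin K, (1 - 1))) :=
    tendsto_finsetSum _ fun k _ => tendsto_const_nhds.sub
      ((hF k).tendsto_atTop.comp (tendsto_atTop_add_const_right _ (-u k) tendsto_id))
  have hbotLimit : 1 < ∑ _k : Fin K, ((1 : ℝ) - 0) := by simpa using hK
  have htopLimit : ∑ _k : Fin K, ((1 : ℝ) - 1) < 1 := by simp
  obtain ⟨a, ha⟩ := (hbot.eventually (eventually_ge_nhds hbotLimit)).exists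
  obtain ⟨b, hb⟩ := (htop.eventually (eventually_le_nhds htopLimit)).exists
  exact mem_range_of_exists_le_of_exists_ge hcont ⟨b, hb⟩ ⟨a, ha⟩

end UpperBound

theorem integral_ciSup_add_eq_dopaObj_of_fin_one {F : Fin 1 → ℝ → ℝ}
    (hF : ∀ k, IsContinuousCDF (F k)) (hq : ∀ k, IntegrableOn (quantile (F k)) (Ioo 0 1))
    {Q : Measure (Fin 1 → ℝ)} (hQ : Q ∈ marginalSet F) (u : Fin 1 → ℝ) :
    ∫ z, ⨆ k, u k + z k ∂Q = dopaObj F u 1 := by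
  have := hQ.1
  simp only [ciSup_unique, Fin.default_eq_zero, dopaObj, Fin.sum_univ_one, Pi.one_apply, mul_one,
    sub_self]
  rw [integral_add (integrable_const _) (integrable_eval_of_mem_marginalSet hF hq hQ 0),
    integral_comp_eval_of_mem_marginalSet hF hQ 0 (g := fun x => x) measurable_id,
    intervalIntegral.integral_of_le zero_le_one, integral_Ioc_eq_integral_Ioo]
  simp

theorem exists_mem_simplex_forall_integral_ciSup_add_le {K : ℕ} {F : Fin K → ℝ → ℝ}
    (hF : ∀ k, IsContinuousCDF (F k)) (hq : ∀ k, IntegrableOn (quantile (F k)) (Ioo 0 1))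
    (hK : 1 ≤ K) (u : Fin K → ℝ) :
    ∃ p ∈ simplex K, ∀ Q ∈ marginalSet F, ∫ z, ⨆ k, u k + z k ∂Q ≤ dopaObj F u p := by
  obtain rfl | hK := hK.eq_or_lt
  -- For `K = 1` a threshold need not exist (`F 0` may be positive everywhere), but every
  -- coupling has the same expectation.
  · exact ⟨1, ⟨fun _ => zero_le_one, by simp⟩, fun Q hQ =>
      (integral_ciSup_add_eq_dopaObj_of_fin_one hF hq hQ u).le⟩
  obtain ⟨t, ht⟩ := exists_sum_one_sub_eq_one hF hK u
  have : Nonempty (Fin K) := ⟨⟨0, by omega⟩⟩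
  exact ⟨_, ⟨fun k => sub_nonneg.2 ((hF k).mem_Icc _).2, ht⟩, fun Q hQ =>
    integral_ciSup_add_le_dopaObj hF hq hQ u ht⟩

theorem map_fract_add_volume_restrict_Ioo (r : ℝ) :
    (volume.restrict (Ioo (0 : ℝ) 1)).map (fun t => Int.fract (t + r)) =
      volume.restrict (Ioo 0 1) := by
  -- `fract (t + r)` factors through the rotation by `r` of `ℝ ⧸ ℤ`, which preserves Haar measure.
  set π : ℝ → UnitAddCircle := (↑)
  set g : UnitAddCircle → ℝ := fun x => (AddCircle.equivIco 1 0 x : ℝ)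
  have hg : Measurable g :=
    measurable_subtype_coe.comp (AddCircle.measurableEquivIco 1 0).measurable
  have hgπ (x : ℝ) : g (π x) = Int.fract x := by simp [g, π]
  have hπ : MeasurePreserving π (volume.restrict (Ioo 0 1)) volume := by
    have := UnitAddCircle.measurePreserving_mk 0
    rwa [zero_add, ← Measure.restrict_congr_set Ioo_ae_eq_Ioc] at this
  have hrot := (measurePreserving_add_right volume (π r)).comp hπ
  have hfract : (fun t => Int.fract (t + r)) = g ∘ ((· + π r) ∘ π) := by
    ext t
    simp only [Function.comp_apply, π, ← AddCircle.coe_add, hgπ]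
  rw [hfract, ← Measure.map_map hg hrot.measurable, hrot.map_eq, ← hπ.map_eq,
    Measure.map_map hg hπ.measurable]
  conv_rhs => rw [← Measure.map_id (μ := volume.restrict (Ioo (0 : ℝ) 1))]
  refine Measure.map_congr (ae_restrict_of_forall_mem measurableSet_Ioo fun t ht => ?_)
  simp only [Function.comp_apply, hgπ, id, Int.fract_eq_self.2 ⟨ht.1.le, ht.2⟩]

section Blocks

variable {ι : Type*} [LinearOrder ι] [LocallyFiniteOrderBot ι] {p : ι → ℝ}

def blockStart (p : ι → ℝ) (k : ι) : ℝ := ∑ j ∈ Finset.Iio k, p j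

def block (p : ι → ℝ) (k : ι) : Set ℝ := Ico (blockStart p k) (blockStart p k + p k)

theorem measurableSet_block (k : ι) : MeasurableSet (block p k) := measurableSet_Ico

theorem blockStart_add_self (k : ι) : blockStart p k + p k = ∑ j ∈ Finset.Iic k, p j := by
  rw [← Finset.Iio_insert, Finset.sum_insert Finset.notMem_Iio_self, blockStart, add_comm]

variable (hp : ∀ k, 0 ≤ p k)
include hp

theorem blockStart_nonneg (k : ι) : 0 ≤ blockStart p k :=
  Finset.sum_nonneg fun j _ => hp j

theorem blockStart_add_self_le_blockStart {j k : ι} (hjk : j < k) :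
    blockStart p j + p j ≤ blockStart p k := by
  rw [blockStart_add_self]
  exact Finset.sum_le_sum_of_subset_of_nonneg
    (fun i hi => Finset.mem_Iio.2 ((Finset.mem_Iic.1 hi).trans_lt hjk)) fun i _ _ => hp i

theorem pairwise_disjoint_block : Pairwise (Function.onFun Disjoint (block p)) := by
  refine (pairwise_disjoint_on _).2 fun j k hjk => Set.disjoint_left.2 fun t htj htk => ?_
  exact (htj.2.trans_le (blockStart_add_self_le_blockStart hp hjk)).not_ge htk.1

variable [Fintype ι] (hp1 : ∑ k, p k = 1)
include hp1

theorem blockStart_add_self_le_one (k : ι) : blockStart p k + p k ≤ 1 := by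
  rw [blockStart_add_self, ← hp1]
  exact Finset.sum_le_sum_of_subset_of_nonneg (Finset.subset_univ _) fun i _ _ => hp i

theorem block_subset_Ico (k : ι) : block p k ⊆ Ico 0 1 :=
  Ico_subset_Ico (blockStart_nonneg hp k) (blockStart_add_self_le_one hp hp1 k)

theorem iUnion_block_ae_eq : (⋃ k, block p k) =ᵐ[volume] Ioo (0 : ℝ) 1 := by
  refine (ae_eq_of_subset_of_measure_ge (iUnion_subset (block_subset_Ico hp hp1)) ?_
    (MeasurableSet.iUnion measurableSet_block).nullMeasurableSet (by simp)).trans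
    Ioo_ae_eq_Ico.symm
  rw [measure_iUnion (pairwise_disjoint_block hp) measurableSet_block, tsum_fintype]
  simp only [block, Real.volume_Ico, add_sub_cancel_left, sub_zero]
  rw [← ENNReal.ofReal_sum_of_nonneg fun k _ => hp k, hp1]

end Blocks

/-- Coordinate `k` rotates the uniform variable so that `block p k` is carried onto
`[1 - p k, 1)`, where `quantile (F k)` takes its top values. -/
noncomputable def couplingMap {K : ℕ} (F : Fin K → ℝ → ℝ) (p : Fin K → ℝ) (t : ℝ) :
    Fin K → ℝ :=
  fun k => quantile (F k) (Int.fract (t + (1 - p k - blockStart p k)))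

noncomputable def couplingMeasure {K : ℕ} (F : Fin K → ℝ → ℝ) (p : Fin K → ℝ) :
    Measure (Fin K → ℝ) :=
  (volume.restrict (Ioo 0 1)).map (couplingMap F p)

section Coupling

variable {K : ℕ} {F : Fin K → ℝ → ℝ} (hF : ∀ k, IsContinuousCDF (F k)) (p : Fin K → ℝ)
include hF

theorem aemeasurable_couplingMap_apply (k : Fin K) :
    AEMeasurable (fun t => couplingMap F p t k) (volume.restrict (Ioo 0 1)) := by
  have hq := (hF k).aemeasurable_quantile
  rw [← map_fract_add_volume_restrict_Ioo (1 - p k - blockStart p k)] at hq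
  exact hq.comp_measurable (measurable_fract.comp (measurable_add_const _))

theorem map_couplingMap_apply (k : Fin K) :
    (volume.restrict (Ioo 0 1)).map (fun t => couplingMap F p t k) =
      (volume.restrict (Ioo 0 1)).map (quantile (F k)) := by
  have hrot := map_fract_add_volume_restrict_Ioo (1 - p k - blockStart p k)
  have hq := (hF k).aemeasurable_quantile
  rw [← hrot] at hq
  calc (volume.restrict (Ioo 0 1)).map (fun t => couplingMap F p t k)
      = ((volume.restrict (Ioo 0 1)).map fun t => Int.fract (t + (1 - p k - blockStart p k))).map
          (quantile (F k)) :=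
        (hq.map_map_of_aemeasurable
          (measurable_fract.comp (measurable_add_const _)).aemeasurable).symm
    _ = (volume.restrict (Ioo 0 1)).map (quantile (F k)) := by rw [hrot]

theorem aemeasurable_couplingMap :
    AEMeasurable (couplingMap F p) (volume.restrict (Ioo 0 1)) :=
  aemeasurable_pi_lambda _ (aemeasurable_couplingMap_apply hF p)

theorem couplingMeasure_mem_marginalSet : couplingMeasure F p ∈ marginalSet F := by
  refine ⟨Measure.isProbabilityMeasure_map (aemeasurable_couplingMap hF p), fun k s => ?_⟩
  have hmarginal : (couplingMeasure F p).map (fun z => z k) =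
      (volume.restrict (Ioo 0 1)).map (quantile (F k)) := by
    rw [couplingMeasure, AEMeasurable.map_map_of_aemeasurable
      (measurable_pi_apply k).aemeasurable (aemeasurable_couplingMap hF p)]
    exact map_couplingMap_apply hF p k
  rw [← (hF k).map_quantile_Iic, ← hmarginal,
    Measure.map_apply (measurable_pi_apply k) measurableSet_Iic]
  rfl

end Coupling

theorem setIntegral_block_couplingMap_apply {K : ℕ} (F : Fin K → ℝ → ℝ) {p : Fin K → ℝ}
    (hp : p ∈ simplex K) (k : Fin K) :
    ∫ t in block p k, couplingMap F p t k = ∫ s in (1 - p k)..1, quantile (F k) s := by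
  have ha0 := blockStart_nonneg hp.1 k
  have ha1 := blockStart_add_self_le_one hp.1 hp.2 k
  have hshift : EqOn (fun t => couplingMap F p t k)
      (fun t => quantile (F k) (t + (1 - p k - blockStart p k))) (block p k) := fun t ht => by
    simp only [couplingMap]
    rw [Int.fract_eq_self.2 ⟨by linarith [ht.1], by linarith [ht.2]⟩]
  rw [setIntegral_congr_fun (measurableSet_block k) hshift, block, integral_Ico_eq_integral_Ioo,
    ← integral_Ioc_eq_integral_Ioo, ← intervalIntegral.integral_of_le (by linarith [hp.1 k]),
    intervalIntegral.integral_comp_add_right]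
  congr 1 <;> ring

theorem dopaObj_le_integral_couplingMeasure {K : ℕ} {F : Fin K → ℝ → ℝ}
    (hF : ∀ k, IsContinuousCDF (F k)) (hq : ∀ k, IntegrableOn (quantile (F k)) (Ioo 0 1))
    {p : Fin K → ℝ} (hp : p ∈ simplex K) (u : Fin K → ℝ) :
    dopaObj F u p ≤ ∫ z, ⨆ k, u k + z k ∂couplingMeasure F p := by
  have hmem := couplingMeasure_mem_marginalSet hF p
  have hT := aemeasurable_couplingMap hF p
  have hsup : Measurable fun z : Fin K → ℝ => ⨆ k, u k + z k :=
    Measurable.iSup fun k => measurable_const.add (measurable_pi_apply k)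
  have hintSup : IntegrableOn (fun t => ⨆ k, u k + couplingMap F p t k) (Ioo 0 1) :=
    (integrable_map_measure hsup.aestronglyMeasurable hT).1
      (integrable_ciSup_add_of_mem_marginalSet hF hq hmem u)
  have hintCoord (k : Fin K) : IntegrableOn (fun t => couplingMap F p t k) (Ioo 0 1) :=
    (integrable_map_measure (measurable_pi_apply k).aestronglyMeasurable hT).1
      (integrable_eval_of_mem_marginalSet hF hq hmem k)
  have hblock {f : ℝ → ℝ} (hf : IntegrableOn f (Ioo 0 1)) (k : Fin K) :
      IntegrableOn f (block p k) :=
    (hf.congr_set_ae Ioo_ae_eq_Ico.symm).mono_set (block_subset_Ico hp.1 hp.2 k)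
  rw [couplingMeasure, integral_map hT hsup.aestronglyMeasurable,
    ← setIntegral_congr_set (iUnion_block_ae_eq hp.1 hp.2),
    integral_iUnion_fintype measurableSet_block (pairwise_disjoint_block hp.1) (hblock hintSup),
    dopaObj, ← Finset.sum_add_distrib]
  refine Finset.sum_le_sum fun k _ => ?_
  have hconst : IntegrableOn (fun _ => u k) (block p k) := integrableOn_const (by simp [block])
  calc u k * p k + ∫ s in (1 - p k)..1, quantile (F k) s
      = ∫ t in block p k, (u k + couplingMap F p t k) := by
        rw [integral_add hconst (hblock (hintCoord k) k),
          setIntegral_block_couplingMap_apply F hp k, setIntegral_const, block,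
          Real.volume_real_Ico_of_le (by linarith [hp.1 k]), smul_eq_mul, add_sub_cancel_left,
          mul_comm]
    _ ≤ ∫ t in block p k, ⨆ j, u j + couplingMap F p t j :=
        setIntegral_mono_on (hconst.add (hblock (hintCoord k) k)) (hblock hintSup k)
          (measurableSet_block k) fun t _ =>
            le_ciSup (f := fun j => u j + couplingMap F p t j) (Set.finite_range _).bddAbove k

theorem stmt0_general (K : ℕ) (hK : 1 ≤ K) (F : Fin K → ℝ → ℝ)
    (hmono : ∀ k, Monotone (F k))
    (hcont : ∀ k, Continuous (F k))
    (hbot : ∀ k, Tendsto (F k) atBot (nhds 0))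
    (htop : ∀ k, Tendsto (F k) atTop (nhds 1))
    (hint : ∀ k, IntegrableOn (quantile (F k)) (Ioo (0:ℝ) 1))
    (u : Fin K → ℝ) :
    (∀ Q ∈ marginalSet F, Integrable (fun z => ⨆ k, u k + z k) Q) ∧
    (PhiSet F u).Nonempty ∧ BddAbove (PhiSet F u) ∧
    ∃ p ∈ simplex K, IsMaxOn (dopaObj F u) (simplex K) p ∧
      sSup (PhiSet F u) = dopaObj F u p := by
  have hF (k : Fin K) : IsContinuousCDF (F k) := ⟨hmono k, hcont k, hbot k, htop k⟩
  have hcoupling (q : Fin K → ℝ) : (∫ z, ⨆ k, u k + z k ∂couplingMeasure F q) ∈ PhiSet F u :=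
    ⟨_, couplingMeasure_mem_marginalSet hF q, rfl⟩
  obtain ⟨p, hp, hle⟩ := exists_mem_simplex_forall_integral_ciSup_add_le hF hint hK u
  have hbdd : dopaObj F u p ∈ upperBounds (PhiSet F u) := by
    rintro _ ⟨Q, hQ, rfl⟩
    exact hle Q hQ
  refine ⟨fun Q hQ => integrable_ciSup_add_of_mem_marginalSet hF hint hQ u, ⟨_, hcoupling p⟩,
    ⟨_, hbdd⟩, p, hp, isMaxOn_iff.2 fun q hq => ?_, ?_⟩
  · exact (dopaObj_le_integral_couplingMeasure hF hint hq u).trans (hbdd (hcoupling q))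
  · exact le_antisymm (csSup_le ⟨_, hcoupling p⟩ hbdd)
      ((dopaObj_le_integral_couplingMeasure hF hint hp u).trans
        (le_csSup ⟨_, hbdd⟩ (hcoupling p)))

theorem stmt0 (K : ℕ) (hK : 1 ≤ K) (F : Fin K → ℝ → ℝ)
    (hmono : ∀ k, Monotone (F k))
    (hcont : ∀ k, Continuous (F k))
    (h01 : ∀ k s, F k s ∈ Icc (0:ℝ) 1)
    (hbot : ∀ k, Tendsto (F k) atBot (nhds 0))
    (htop : ∀ k, Tendsto (F k) atTop (nhds 1))
    (hstrict : ∀ k, StrictMonoOn (F k) {s | F k s ∈ Ioo (0:ℝ) 1})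
    (hint : ∀ k, IntegrableOn (quantile (F k)) (Ioo (0:ℝ) 1))
    (u : Fin K → ℝ) :
    (∀ Q ∈ marginalSet F, Integrable (fun z => ⨆ k, u k + z k) Q) ∧
    (PhiSet F u).Nonempty ∧ BddAbove (PhiSet F u) ∧
    ∃ p ∈ simplex K, IsMaxOn (dopaObj F u) (simplex K) p ∧
      sSup (PhiSet F u) = dopaObj F u p :=
  stmt0_general K hK F hmono hcont hbot htop hint u
end

section
/- Let K ≥ 1 and let F_1,…,F_K : ℝ → [0,1] be cumulative distribution functions, each continuous, each strictly increasing at every point s ∈ ℝ (so that 0 < F_k(s) < 1 for all s ∈ ℝ), and each with finite first moment. Then for every u ∈ ℝ^K the unique maximizer p(u) of max_{p ∈ Δ^K} [ Σ_{k=1}^K u_k p_k + Σ_{k=1}^K ∫_{1−p_k}^1 F_k^{-1}(t) dt ] satisfies p_k(u) > 0 for every k ∈ [K]. -/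
/-! If `p k = 0`, move a small mass `ε` from a coordinate `j` with `p j > 0` to `k`. Since the
quantile function is nondecreasing, the objective loses at most `ε (u j + F_j⁻¹(1 - p j / 2))`
at `j` and gains at least `ε (u k + F_k⁻¹(1 - ε))` at `k`. As `F_k < 1` everywhere,
`F_k⁻¹(1 - ε) → ∞` when `ε → 0`, so for small `ε` the transfer strictly increases the objective,
contradicting maximality. -/

open MeasureTheory Set Filter

section MonotoneIntegral

variable {f : ℝ → ℝ} {a b : ℝ}

lemma MonotoneOn.mul_le_intervalIntegral (hab : a ≤ b) (hf : MonotoneOn f (Ico a b))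
    (hint : IntervalIntegrable f volume a b) : (b - a) * f a ≤ ∫ x in a..b, f x := by
  rw [intervalIntegral.integral_of_le hab, integral_Ioc_eq_integral_Ioo]
  calc (b - a) * f a = ∫ _ in Ioo a b, f a := by
        rw [setIntegral_const, Real.volume_real_Ioo_of_le hab, smul_eq_mul]
    _ ≤ ∫ x in Ioo a b, f x :=
        setIntegral_mono_on (integrableOn_const measure_Ioo_lt_top.ne)
          (hint.1.mono_set Ioo_subset_Ioc_self) measurableSet_Ioo
          fun x hx => hf ⟨le_rfl, hx.1.trans hx.2⟩ (Ioo_subset_Ico_self hx) hx.1.le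

lemma MonotoneOn.intervalIntegral_le_mul (hab : a ≤ b) (hf : MonotoneOn f (Ioc a b))
    (hint : IntervalIntegrable f volume a b) : ∫ x in a..b, f x ≤ (b - a) * f b := by
  rw [intervalIntegral.integral_of_le hab, integral_Ioc_eq_integral_Ioo]
  calc ∫ x in Ioo a b, f x ≤ ∫ _ in Ioo a b, f b :=
        setIntegral_mono_on (hint.1.mono_set Ioo_subset_Ioc_self)
          (integrableOn_const measure_Ioo_lt_top.ne) measurableSet_Ioo
          fun x hx => hf (Ioo_subset_Ioc_self hx) ⟨hx.1.trans hx.2, le_rfl⟩ hx.2.le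
    _ = (b - a) * f b := by
        rw [setIntegral_const, Real.volume_real_Ioo_of_le hab, smul_eq_mul]

end MonotoneIntegral

section Quantile

variable {F : ℝ → ℝ}

lemma bddBelow_quantile_set (hF : Monotone F) (hbot : Tendsto F atBot (nhds 0)) {s : ℝ}
    (hs : 0 < s) : BddBelow {t | s ≤ F t} := by
  obtain ⟨T, hT⟩ := (hbot.eventually_lt_const hs).exists
  exact ⟨T, fun t ht => le_of_not_gt fun htT => (hF htT.le).not_gt (hT.trans_le ht)⟩

lemma nonempty_quantile_set (htop : Tendsto F atTop (nhds 1)) {s : ℝ} (hs : s < 1) :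
    {t | s ≤ F t}.Nonempty :=
  let ⟨T, hT⟩ := (htop.eventually_const_lt hs).exists
  ⟨T, hT.le⟩

lemma le_quantile_of_lt (hF : Monotone F) (htop : Tendsto F atTop (nhds 1)) {s M : ℝ}
    (hs : s < 1) (hM : F M < s) : M ≤ quantile F s :=
  le_csInf (nonempty_quantile_set htop hs) fun _ ht =>
    le_of_not_gt fun htM => (hF htM.le).not_gt (hM.trans_le ht)

lemma monotoneOn_quantile (hF : Monotone F) (hbot : Tendsto F atBot (nhds 0))
    (htop : Tendsto F atTop (nhds 1)) : MonotoneOn (quantile F) (Ioo 0 1) :=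
  fun _ hs _ hs' hss' => csInf_le_csInf (bddBelow_quantile_set hF hbot hs.1)
    (nonempty_quantile_set htop hs'.2) fun _ ht => hss'.trans ht

end Quantile

lemma Fintype.sum_apply_update {ι M : Type*} [Fintype ι] [DecidableEq ι] [AddCommGroup M]
    (φ : ι → M → M) (p : ι → M) (i : ι) (a : M) :
    ∑ l, φ l (Function.update p i a l) = ∑ l, φ l (p l) + (φ i a - φ i (p i)) := by
  rw [← sub_eq_iff_eq_add', ← Finset.sum_sub_distrib,
    Fintype.sum_eq_single i fun l hl => by simp [Function.update_of_ne hl], Function.update_self]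

section DopaTerm

noncomputable def dopaTerm (F : ℝ → ℝ) (c x : ℝ) : ℝ := c * x + ∫ t in (1 - x)..1, quantile F t

lemma dopaObj_eq_sum_dopaTerm {K : ℕ} (F : Fin K → ℝ → ℝ) (u p : Fin K → ℝ) :
    dopaObj F u p = ∑ k, dopaTerm (F k) (u k) (p k) := by
  simp only [dopaObj, dopaTerm, Finset.sum_add_distrib]

lemma dopaObj_update {K : ℕ} (F : Fin K → ℝ → ℝ) (u p : Fin K → ℝ) (i : Fin K) (a : ℝ) :
    dopaObj F u (Function.update p i a)
      = dopaObj F u p + (dopaTerm (F i) (u i) a - dopaTerm (F i) (u i) (p i)) := by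
  simp only [dopaObj_eq_sum_dopaTerm]
  exact Fintype.sum_apply_update (fun k => dopaTerm (F k) (u k)) p i a

variable {F : ℝ → ℝ}

lemma mul_le_dopaTerm (hF : Monotone F) (hbot : Tendsto F atBot (nhds 0))
    (htop : Tendsto F atTop (nhds 1)) (hint : IntegrableOn (quantile F) (Icc 0 1))
    (c : ℝ) {ε M : ℝ} (hε : ε ∈ Ioo 0 1) (hM : F M < 1 - ε) :
    ε * (c + M) ≤ dopaTerm F c ε := by
  have hQ : MonotoneOn (quantile F) (Ico (1 - ε) 1) :=
    (monotoneOn_quantile hF hbot htop).mono fun t ht => ⟨by linarith [hε.2, ht.1], ht.2⟩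
  have hI : IntervalIntegrable (quantile F) volume (1 - ε) 1 :=
    (hint.mono_set (uIcc_subset_Icc ⟨by linarith [hε.2], by linarith [hε.1]⟩
      ⟨zero_le_one, le_rfl⟩)).intervalIntegrable
  have hlow := hQ.mul_le_intervalIntegral (by linarith [hε.1]) hI
  have hMQ : M ≤ quantile F (1 - ε) := le_quantile_of_lt hF htop (by linarith [hε.1]) hM
  have := mul_le_mul_of_nonneg_left hMQ hε.1.le
  rw [dopaTerm]
  linarith

lemma dopaTerm_sub_dopaTerm_le (hF : Monotone F) (hbot : Tendsto F atBot (nhds 0))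
    (htop : Tendsto F atTop (nhds 1)) (hint : IntegrableOn (quantile F) (Icc 0 1))
    (c : ℝ) {x y : ℝ} (hy : 0 < y) (hyx : y ≤ x) (hx : x ≤ 1) :
    dopaTerm F c x - dopaTerm F c y ≤ (x - y) * (c + quantile F (1 - y)) := by
  have hI : ∀ a b, 0 ≤ a → a ≤ 1 → 0 ≤ b → b ≤ 1 → IntervalIntegrable (quantile F) volume a b :=
    fun a b ha0 ha1 hb0 hb1 =>
      (hint.mono_set (uIcc_subset_Icc ⟨ha0, ha1⟩ ⟨hb0, hb1⟩)).intervalIntegrable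
  have hsplit := intervalIntegral.integral_add_adjacent_intervals
    (hI (1 - x) (1 - y) (by linarith) (by linarith) (by linarith) (by linarith))
    (hI (1 - y) 1 (by linarith) (by linarith) zero_le_one le_rfl)
  have hQ : MonotoneOn (quantile F) (Ioc (1 - x) (1 - y)) :=
    (monotoneOn_quantile hF hbot htop).mono fun t ht => ⟨by linarith [ht.1], by linarith [ht.2]⟩
  have hup := hQ.intervalIntegral_le_mul (by linarith)
    (hI (1 - x) (1 - y) (by linarith) (by linarith) (by linarith) (by linarith))
  rw [dopaTerm, dopaTerm, ← hsplit]
  linarith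

lemma dopaTerm_zero (F : ℝ → ℝ) (c : ℝ) : dopaTerm F c 0 = 0 := by
  simp [dopaTerm]

end DopaTerm

section Transfer

variable {K : ℕ} {p : Fin K → ℝ} {i j : Fin K} {ε : ℝ}

lemma update_update_mem_simplex (hp : p ∈ simplex K) (hij : i ≠ j) (hε : 0 ≤ ε) (hεj : ε ≤ p j) :
    Function.update (Function.update p i (p i + ε)) j (p j - ε) ∈ simplex K := by
  refine ⟨fun l => ?_, ?_⟩
  · simp only [Function.update_apply]
    split_ifs <;> linarith [hp.1 l, hp.1 i]
  · rw [Fintype.sum_apply_update (fun _ x => x), Fintype.sum_apply_update (fun _ x => x),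
      Function.update_of_ne hij.symm, hp.2]
    ring

lemma dopaObj_update_update (F : Fin K → ℝ → ℝ) (u : Fin K → ℝ) (hij : i ≠ j) :
    dopaObj F u (Function.update (Function.update p i (p i + ε)) j (p j - ε))
      = dopaObj F u p + (dopaTerm (F i) (u i) (p i + ε) - dopaTerm (F i) (u i) (p i))
        - (dopaTerm (F j) (u j) (p j) - dopaTerm (F j) (u j) (p j - ε)) := by
  rw [dopaObj_update, dopaObj_update, Function.update_of_ne hij.symm]
  ring

lemma exists_dopaObj_gt_of_eq_zero (F : Fin K → ℝ → ℝ) (u : Fin K → ℝ)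
    (hF : ∀ i, Monotone (F i)) (hbot : ∀ i, Tendsto (F i) atBot (nhds 0))
    (htop : ∀ i, Tendsto (F i) atTop (nhds 1))
    (hint : ∀ i, IntegrableOn (quantile (F i)) (Icc 0 1)) (hlt : ∀ s, F i s < 1)
    (hp : p ∈ simplex K) (hpi : p i = 0) (hpj : 0 < p j) :
    ∃ q ∈ simplex K, dopaObj F u p < dopaObj F u q := by
  have hij : i ≠ j := by rintro rfl; linarith
  have hpj1 : p j ≤ 1 := hp.2 ▸ Finset.single_le_sum (fun l _ => hp.1 l) (Finset.mem_univ j)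
  -- moving mass `ε` out of `j` costs at most `ε (u j + Qj)`; `M` makes the gain at `i` larger
  set Qj := quantile (F j) (1 - p j / 2)
  set M := u j - u i + Qj + 1 with hM
  set ε := min (p j / 2) ((1 - F i M) / 2)
  have hε0 : 0 < ε := lt_min (by linarith) (by linarith [hlt M])
  have hεj : ε ≤ p j / 2 := min_le_left _ _
  have hεM : F i M < 1 - ε := by linarith [min_le_right (p j / 2) ((1 - F i M) / 2), hlt M]
  have hgain := mul_le_dopaTerm (hF i) (hbot i) (htop i) (hint i) (u i) ⟨hε0, by linarith⟩ hεM
  have hloss := dopaTerm_sub_dopaTerm_le (hF j) (hbot j) (htop j) (hint j) (u j)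
    (x := p j) (y := p j - ε) (by linarith) (by linarith) hpj1
  have hQ : quantile (F j) (1 - (p j - ε)) ≤ Qj :=
    monotoneOn_quantile (hF j) (hbot j) (htop j)
      ⟨by linarith, by linarith⟩ ⟨by linarith, by linarith⟩ (by linarith)
  refine ⟨_, update_update_mem_simplex hp hij hε0.le (by linarith), ?_⟩
  rw [dopaObj_update_update F u hij, hpi, zero_add, dopaTerm_zero]
  have := mul_le_mul_of_nonneg_left hQ hε0.le
  have : ε * (u i + M) = ε * (u j + Qj) + ε := by rw [hM]; ring
  linarith

end Transfer

theorem stmt2_general (K : ℕ) (F : Fin K → ℝ → ℝ)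
    (hmono : ∀ k, StrictMono (F k))
    (h01 : ∀ k s, F k s ∈ Ioo (0:ℝ) 1)
    (hbot : ∀ k, Tendsto (F k) atBot (nhds 0))
    (htop : ∀ k, Tendsto (F k) atTop (nhds 1))
    (hint : ∀ k, IntegrableOn (quantile (F k)) (Ioo (0:ℝ) 1)) :
    ∀ u p, p ∈ simplex K → IsMaxOn (dopaObj F u) (simplex K) p →
      ∀ k, 0 < p k := by
  intro u p hp hmax k
  by_contra! hk
  obtain ⟨j, hj⟩ : ∃ j, 0 < p j := by
    by_contra! h
    linarith [hp.2, Finset.sum_nonpos fun i (_ : i ∈ Finset.univ) => h i]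
  obtain ⟨q, hq, hpq⟩ := exists_dopaObj_gt_of_eq_zero F u (fun i => (hmono i).monotone) hbot htop
    (fun i => (integrableOn_Icc_iff_integrableOn_Ioo (f := quantile (F i))).2 (hint i))
    (fun s => (h01 k s).2) hp (le_antisymm hk (hp.1 k)) hj
  exact (hmax hq).not_gt hpq

theorem stmt2 (K : ℕ) (hK : 1 ≤ K) (F : Fin K → ℝ → ℝ)
    (hmono : ∀ k, StrictMono (F k))
    (hcont : ∀ k, Continuous (F k))
    (h01 : ∀ k s, F k s ∈ Ioo (0:ℝ) 1)
    (hbot : ∀ k, Tendsto (F k) atBot (nhds 0))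
    (htop : ∀ k, Tendsto (F k) atTop (nhds 1))
    (hint : ∀ k, IntegrableOn (quantile (F k)) (Ioo (0:ℝ) 1)) :
    ∀ u p, p ∈ simplex K → IsMaxOn (dopaObj F u) (simplex K) p →
      ∀ k, 0 < p k :=
  stmt2_general K F hmono h01 hbot htop hint
end

section
/- Let K ≥ 2 and let F_1,…,F_K : ℝ → [0,1] be cumulative distribution functions, each continuous, each strictly increasing at every point s with F_k(s) ∈ (0,1), and each with finite first moment. Fix u ∈ ℝ^K and let p be the unique maximizer of max_{p ∈ Δ^K} [ Σ_{k=1}^K u_k p_k + Σ_{k=1}^K ∫_{1−p_k}^1 F_k^{-1}(t) dt ]. If p_k > 0 for every k ∈ [K], then the first-order optimality conditions give u_k + F_k^{-1}(1−p_k) = u_ℓ + F_ℓ^{-1}(1−p_ℓ) for all k, ℓ ∈ [K]. -/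
open MeasureTheory Set Filter

section aux
variable {F : ℝ → ℝ} {s : ℝ}

lemma quant_ne (ht : Tendsto F atTop (nhds 1)) (hs1 : s < 1) :
    {t | s ≤ F t}.Nonempty := by
  obtain ⟨t, htt⟩ := (ht.eventually (eventually_gt_nhds hs1)).exists
  exact ⟨t, htt.le⟩

lemma quant_bdd (hb : Tendsto F atBot (nhds 0)) (hs0 : 0 < s) :
    BddBelow {t | s ≤ F t} := by
  obtain ⟨t0, ht0⟩ := eventually_atBot.mp (hb.eventually (eventually_lt_nhds hs0))
  refine ⟨t0, fun x hx => ?_⟩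
  by_contra h
  exact absurd hx (not_le.mpr (ht0 x (le_of_not_ge h)))

lemma quant_F_ge (hc : Continuous F) (hb : Tendsto F atBot (nhds 0))
    (ht : Tendsto F atTop (nhds 1)) (hs : s ∈ Ioo (0:ℝ) 1) :
    s ≤ F (quantile F s) := by
  have hcl : IsClosed {t | s ≤ F t} := isClosed_le continuous_const hc
  exact hcl.csInf_mem (quant_ne ht hs.2) (quant_bdd hb hs.1)

lemma quant_F_le (hc : Continuous F) (hb : Tendsto F atBot (nhds 0))
    (hs : s ∈ Ioo (0:ℝ) 1) : F (quantile F s) ≤ s := by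
  by_contra h
  push_neg at h
  have hU : IsOpen {t | s < F t} := isOpen_lt continuous_const hc
  obtain ⟨ε, hε, hball⟩ := Metric.isOpen_iff.mp hU _ h
  have hmem : quantile F s - ε/2 ∈ {t | s ≤ F t} := by
    have : quantile F s - ε/2 ∈ Metric.ball (quantile F s) ε := by
      simp only [Metric.mem_ball, Real.dist_eq]
      rw [abs_of_nonpos (by linarith)]
      linarith
    have h2 : s < F (quantile F s - ε/2) := hball this
    exact h2.le
  have : sInf {t | s ≤ F t} ≤ quantile F s - ε/2 := csInf_le (quant_bdd hb hs.1) hmem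
  unfold quantile at this
  linarith

lemma quant_F_eq (hc : Continuous F) (hb : Tendsto F atBot (nhds 0))
    (ht : Tendsto F atTop (nhds 1)) (hs : s ∈ Ioo (0:ℝ) 1) :
    F (quantile F s) = s :=
  le_antisymm (quant_F_le hc hb hs) (quant_F_ge hc hb ht hs)

lemma quant_sub_lt (hb : Tendsto F atBot (nhds 0)) (hs : s ∈ Ioo (0:ℝ) 1)
    {δ : ℝ} (hδ : 0 < δ) : F (quantile F s - δ) < s := by
  by_contra h
  push_neg at h
  have : sInf {t | s ≤ F t} ≤ quantile F s - δ := csInf_le (quant_bdd hb hs.1) h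
  unfold quantile at this
  linarith

lemma quant_lt_F (hc : Continuous F) (hb : Tendsto F atBot (nhds 0))
    (ht : Tendsto F atTop (nhds 1)) (hm : Monotone F)
    (hstrict : StrictMonoOn F {x | F x ∈ Ioo (0:ℝ) 1})
    (hs : s ∈ Ioo (0:ℝ) 1) {t : ℝ} (h : quantile F s < t) : s < F t := by
  have hq := quant_F_eq hc hb ht hs
  have hge : s ≤ F t := hq ▸ hm h.le
  rcases eq_or_lt_of_le hge with heq | hlt
  · exfalso
    have h1 : F (quantile F s) ∈ Ioo (0:ℝ) 1 := by rw [hq]; exact hs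
    have h2 : F t ∈ Ioo (0:ℝ) 1 := by rw [← heq]; exact hs
    have := hstrict h1 h2 h
    rw [hq, ← heq] at this
    exact lt_irrefl _ this
  · exact hlt

lemma quant_mono (hb : Tendsto F atBot (nhds 0)) (ht : Tendsto F atTop (nhds 1))
    {s1 s2 : ℝ} (h1 : 0 < s1) (h2 : s2 < 1) (h12 : s1 ≤ s2) :
    quantile F s1 ≤ quantile F s2 :=
  csInf_le_csInf (quant_bdd hb h1) (quant_ne ht h2) (fun _ htt => le_trans h12 htt)

end aux

lemma quant_intInteg {F : ℝ → ℝ} (hint : IntegrableOn (quantile F) (Ioo (0:ℝ) 1))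
    {x y : ℝ} (hx : 0 < x) (hxy : x ≤ y) (hy : y ≤ 1) :
    IntervalIntegrable (quantile F) volume x y := by
  rw [intervalIntegrable_iff_integrableOn_Ioc_of_le hxy]
  have h1 : IntegrableOn (quantile F) (Ioo x y) := hint.mono_set (Ioo_subset_Ioo hx.le hy)
  exact h1.congr_set_ae Ioo_ae_eq_Ioc.symm

noncomputable def gaux {K : ℕ} (F : Fin K → ℝ → ℝ) (u : Fin K → ℝ) (i : Fin K) (x : ℝ) : ℝ :=
  u i * x + ∫ t in (1 - x)..1, quantile (F i) t

lemma dopa_eq {K : ℕ} (F : Fin K → ℝ → ℝ) (u v : Fin K → ℝ) :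
    dopaObj F u v = ∑ i, gaux F u i (v i) := by
  unfold dopaObj gaux
  rw [Finset.sum_add_distrib]

theorem stmt3 (K : ℕ) (hK : 2 ≤ K) (F : Fin K → ℝ → ℝ)
    (hmono : ∀ k, Monotone (F k))
    (hcont : ∀ k, Continuous (F k))
    (h01 : ∀ k s, F k s ∈ Icc (0:ℝ) 1)
    (hbot : ∀ k, Tendsto (F k) atBot (nhds 0))
    (htop : ∀ k, Tendsto (F k) atTop (nhds 1))
    (hstrict : ∀ k, StrictMonoOn (F k) {s | F k s ∈ Ioo (0:ℝ) 1})
    (hint : ∀ k, IntegrableOn (quantile (F k)) (Ioo (0:ℝ) 1))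
    (u p : Fin K → ℝ) (hp : p ∈ simplex K)
    (hmax : IsMaxOn (dopaObj F u) (simplex K) p)
    (huniq : ∀ q ∈ simplex K, IsMaxOn (dopaObj F u) (simplex K) q → q = p)
    (hpos : ∀ k, 0 < p k) :
    ∀ k l : Fin K, u k + quantile (F k) (1 - p k) = u l + quantile (F l) (1 - p l) := by
  obtain ⟨hnn, hsum⟩ := hp
  have key : ∀ k l : Fin K, k ≠ l →
      u k + quantile (F k) (1 - p k) ≤ u l + quantile (F l) (1 - p l) := by
    intro k l hkl
    refine le_of_forall_pos_le_add ?_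
    intro δ hδ
    set a := 1 - p k with ha
    set b := 1 - p l with hb'
    have hpkl : p k + p l ≤ 1 := by
      have h1 : ∑ i ∈ ({k, l} : Finset (Fin K)), p i ≤ ∑ i, p i :=
        Finset.sum_le_sum_of_subset_of_nonneg (Finset.subset_univ _) (fun i _ _ => hnn i)
      rw [Finset.sum_pair hkl] at h1
      linarith
    have haI : a ∈ Ioo (0:ℝ) 1 := ⟨by rw [ha]; linarith [hpos l], by rw [ha]; linarith [hpos k]⟩
    have hbI : b ∈ Ioo (0:ℝ) 1 := ⟨by rw [hb']; linarith [hpos k], by rw [hb']; linarith [hpos l]⟩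
    set Qa := quantile (F k) a with hQa'
    set Qb := quantile (F l) b with hQb'
    set c := F k (Qa - δ/2) with hc'
    have hca : c < a := quant_sub_lt (hbot k) haI (by linarith)
    set t0 := Qb + δ/4 with ht0'
    have hbt0 : b < F l t0 :=
      quant_lt_F (hcont l) (hbot l) (htop l) (hmono l) (hstrict l) hbI (by rw [ht0']; linarith)
    set ε := min (min ((a - c)/2) ((F l t0 - b)/2)) (min (p l / 2) (a / 2)) with hε'
    have hε1 : ε ≤ (a - c)/2 := le_trans (min_le_left _ _) (min_le_left _ _)
    have hε2 : ε ≤ (F l t0 - b)/2 := le_trans (min_le_left _ _) (min_le_right _ _)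
    have hε3 : ε ≤ p l / 2 := le_trans (min_le_right _ _) (min_le_left _ _)
    have hε4 : ε ≤ a / 2 := le_trans (min_le_right _ _) (min_le_right _ _)
    have hε0 : 0 < ε :=
      lt_min (lt_min (by linarith) (by linarith)) (lt_min (by linarith [hpos l]) (by linarith [haI.1]))
    set q : Fin K → ℝ := fun i => if i = k then p i + ε else if i = l then p i - ε else p i with hq'
    have hqk : q k = p k + ε := by rw [hq']; simp
    have hql : q l = p l - ε := by rw [hq']; simp [Ne.symm hkl]
    have hqo : ∀ i, i ≠ k → i ≠ l → q i = p i := by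
      intro i h1 h2; rw [hq']; simp [h1, h2]
    have hqmem : q ∈ simplex K := by
      constructor
      · intro i
        by_cases h1 : i = k
        · subst h1; rw [hqk]; linarith [hnn i]
        by_cases h2 : i = l
        · subst h2; rw [hql]; linarith [hpos i]
        · rw [hqo i h1 h2]; exact hnn i
      · have hpt : ∀ i : Fin K, q i = p i + ((if i = k then ε else 0) - (if i = l then ε else 0)) := by
          intro i
          by_cases h1 : i = k
          · subst h1; rw [hqk, if_pos rfl, if_neg hkl]; ring
          by_cases h2 : i = l
          · subst h2; rw [hql, if_neg (Ne.symm hkl), if_pos rfl]; ring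
          · rw [hqo i h1 h2, if_neg h1, if_neg h2]; ring
        rw [Finset.sum_congr rfl (fun i _ => hpt i), Finset.sum_add_distrib,
          Finset.sum_sub_distrib, Finset.sum_ite_eq', Finset.sum_ite_eq']
        simp [hsum]
    -- split the integrals
    have haε0 : 0 < a - ε := by linarith [haI.1]
    have hbε1 : b + ε < 1 := by rw [hb']; linarith [hpos l]
    have hsplitk : (∫ t in (a-ε)..a, quantile (F k) t) + ∫ t in a..1, quantile (F k) t
        = ∫ t in (a-ε)..1, quantile (F k) t :=
      intervalIntegral.integral_add_adjacent_intervals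
        (quant_intInteg (hint k) haε0 (by linarith) haI.2.le)
        (quant_intInteg (hint k) haI.1 haI.2.le le_rfl)
    have hsplitl : (∫ t in b..(b+ε), quantile (F l) t) + ∫ t in (b+ε)..1, quantile (F l) t
        = ∫ t in b..1, quantile (F l) t :=
      intervalIntegral.integral_add_adjacent_intervals
        (quant_intInteg (hint l) hbI.1 (by linarith) hbε1.le)
        (quant_intInteg (hint l) (by linarith [hbI.1]) hbε1.le le_rfl)
    have hgk : gaux F u k (q k) - gaux F u k (p k)
        = ε * u k + ∫ t in (a-ε)..a, quantile (F k) t := by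
      unfold gaux
      rw [hqk, show (1:ℝ) - (p k + ε) = a - ε from by rw [ha]; ring,
        show (1:ℝ) - p k = a from ha.symm, ← hsplitk]
      ring
    have hgl : gaux F u l (q l) - gaux F u l (p l)
        = -(ε * u l) - ∫ t in b..(b+ε), quantile (F l) t := by
      unfold gaux
      rw [hql, show (1:ℝ) - (p l - ε) = b + ε from by rw [hb']; ring,
        show (1:ℝ) - p l = b from hb'.symm, ← hsplitl]
      ring
    have hdiff : dopaObj F u q - dopaObj F u p
        = (gaux F u k (q k) - gaux F u k (p k)) + (gaux F u l (q l) - gaux F u l (p l)) := by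
      rw [dopa_eq, dopa_eq, ← Finset.sum_sub_distrib]
      have h0 : ∀ i ∈ Finset.univ, i ∉ ({k, l} : Finset (Fin K)) →
          gaux F u i (q i) - gaux F u i (p i) = 0 := by
        intro i _ hi
        simp only [Finset.mem_insert, Finset.mem_singleton] at hi
        push_neg at hi
        rw [hqo i hi.1 hi.2, sub_self]
      rw [← Finset.sum_subset (Finset.subset_univ ({k, l} : Finset (Fin K))) h0,
        Finset.sum_pair hkl]
    have hD : ε * u k + (∫ t in (a-ε)..a, quantile (F k) t)
        - (ε * u l) - (∫ t in b..(b+ε), quantile (F l) t) ≤ 0 := by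
      have hle : dopaObj F u q ≤ dopaObj F u p := hmax hqmem
      linarith [hdiff, hgk, hgl, hle]
    -- bound the integrals
    have hI1 : ε * quantile (F k) (a - ε) ≤ ∫ t in (a-ε)..a, quantile (F k) t := by
      have hm := intervalIntegral.integral_mono_on (by linarith : a - ε ≤ a)
        (intervalIntegrable_const (c := quantile (F k) (a - ε)))
        (quant_intInteg (hint k) haε0 (by linarith) haI.2.le)
        (fun t ht => quant_mono (hbot k) (htop k) haε0 (lt_of_le_of_lt ht.2 haI.2) ht.1)
      rw [intervalIntegral.integral_const, smul_eq_mul] at hm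
      calc ε * quantile (F k) (a - ε) = (a - (a - ε)) * quantile (F k) (a - ε) := by ring
        _ ≤ _ := hm
    have hI2 : (∫ t in b..(b+ε), quantile (F l) t) ≤ ε * quantile (F l) (b + ε) := by
      have hm := intervalIntegral.integral_mono_on (by linarith : b ≤ b + ε)
        (quant_intInteg (hint l) hbI.1 (by linarith) hbε1.le)
        (intervalIntegrable_const (c := quantile (F l) (b + ε)))
        (fun t ht => quant_mono (hbot l) (htop l) (lt_of_lt_of_le hbI.1 ht.1) hbε1 ht.2)
      rw [intervalIntegral.integral_const, smul_eq_mul] at hm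
      calc (∫ t in b..(b+ε), quantile (F l) t) ≤ (b + ε - b) * quantile (F l) (b + ε) := hm
        _ = ε * quantile (F l) (b + ε) := by ring
    have hmul : ε * (u k + quantile (F k) (a - ε)) ≤ ε * (u l + quantile (F l) (b + ε)) := by
      nlinarith [hD, hI1, hI2]
    have hdiv : u k + quantile (F k) (a - ε) ≤ u l + quantile (F l) (b + ε) :=
      le_of_mul_le_mul_left hmul hε0
    -- quantile continuity bounds
    have hQab : Qa - δ/2 ≤ quantile (F k) (a - ε) := by
      refine le_csInf (quant_ne (htop k) (by linarith [haI.2] : a - ε < 1)) ?_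
      intro t htmem
      simp only [mem_setOf_eq] at htmem
      by_contra hcon
      push_neg at hcon
      have h1 : F k t ≤ c := by rw [hc']; exact hmono k hcon.le
      linarith
    have hQbb : quantile (F l) (b + ε) ≤ Qb + δ/4 := by
      have hmem : t0 ∈ {t | b + ε ≤ F l t} := by
        simp only [mem_setOf_eq]
        linarith
      have := csInf_le (quant_bdd (hbot l) (by linarith [hbI.1] : 0 < b + ε)) hmem
      rw [ht0'] at this
      exact this
    linarith
  intro k l
  rcases eq_or_ne k l with rfl | hkl
  · rfl
  · exact le_antisymm (key k l hkl) (key l k (Ne.symm hkl))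
end

section
/- (Corollary 2, hybrid Fréchet regularizers.) Let K ≥ 1, let G_1 and G_2 be marginal generators, and let γ_1, γ_2 > 0. The function H = γ_1 G_1^{-1} + γ_2 G_2^{-1} : (0,1) → ℝ is strictly increasing; define F as its generalized inverse, F(x) = sup{t ∈ (0,1) : H(t) ≤ x} (with sup ∅ = 0), and let B be the marginal ambiguity set with marginal CDFs F_k(s) = min{1, max{0, 1 − F(−s)}} for all k ∈ [K]. Define g_1(s) = ∫_0^s G_1^{-1}(t) dt and g_2(s) = ∫_0^s G_2^{-1}(t) dt for s ∈ [0,1]. Then Φ(u;B) = max_{p ∈ Δ^K} [ Σ_{k=1}^K u_k p_k − Σ_{k=1}^K ( γ_1 g_1(p_k) + γ_2 g_2(p_k) ) ] for every u ∈ ℝ^K. -/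
open MeasureTheory Set Filter

noncomputable def Phi {K : ℕ} (F : Fin K → ℝ → ℝ) (u : Fin K → ℝ) : ℝ :=
  sSup {x | ∃ Q ∈ marginalSet F, x = ∫ z, (⨆ k, u k + z k) ∂Q}

/-!
Write `z k = -H(U)` for the common marginal law, `U` uniform on `(0,1)`, and let `F` be the
generalized inverse of `H`. For every level `v`, pointwise
`max_k (u k + z k) ≤ v + ∑ k, (u k + z k - v)⁺`, and the expectation of the right-hand side
depends on the marginals only: it equals `v + ∑ k, ∫₀¹ (u k - v - H)⁺`. Choosing `v` with
`∑ k, F (u k - v) = 1` (intermediate value theorem, `K ≥ 2`) and `p k = F (u k - v)` turns this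
bound into `∑ k, u k p k - ∑ k, ∫₀^{p k} H`, and `p` maximizes that concave objective on the
simplex because `H < u k - v` below `p k` and `H > u k - v` above it. The bound is attained:
cut `(0,1)` into consecutive slabs of lengths `p k` and let coordinate `k` rotate `U` so that its
slab lands on `(0, p k)`; then on slab `k` only coordinate `k` exceeds `v`. For `K = 1` the
maximum is just `u 0 + z 0`. Finally `γ₁ g₁ + γ₂ g₂ = ∫₀^· H`.
-/

namespace HybridFrechet

lemma quantile_apply_apply {G : ℝ → ℝ} (hG : StrictMono G) (c : ℝ) : quantile G (G c) = c := by
  simp only [quantile, hG.le_iff_le]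
  exact csInf_Ici

lemma strictMonoOn_quantile {G : ℝ → ℝ} (hG : StrictMono G) (hc : Continuous G)
    (hbot : ∀ ε > (0:ℝ), ∃ s, G s < ε) (htop : ∀ ε > (0:ℝ), ∃ s, 1 - ε < G s) :
    StrictMonoOn (quantile G) (Ioo 0 1) := by
  have hrange : Ioo (0:ℝ) 1 ⊆ range G := fun y hy => by
    obtain ⟨a, ha⟩ := hbot y hy.1
    obtain ⟨b, hb⟩ := htop (1 - y) (sub_pos.mpr hy.2)
    exact intermediate_value_univ a b hc ⟨ha.le, by linarith⟩
  rintro _ hx _ hy hxy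
  obtain ⟨a, rfl⟩ := hrange hx
  obtain ⟨b, rfl⟩ := hrange hy
  rwa [quantile_apply_apply hG, quantile_apply_apply hG, ← hG.lt_iff_lt]

lemma intervalIntegrable_of_integrableOn_Ioo {f : ℝ → ℝ} (hf : IntegrableOn f (Ioo 0 1))
    {a b : ℝ} (ha : a ∈ Icc (0:ℝ) 1) (hb : b ∈ Icc (0:ℝ) 1) : IntervalIntegrable f volume a b :=
  ((intervalIntegrable_iff_integrableOn_Ioo_of_le zero_le_one).mpr hf).mono_set
    (uIcc_subset_uIcc (by rwa [uIcc_of_le zero_le_one]) (by rwa [uIcc_of_le zero_le_one]))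

lemma integral_const_mul_add_const_mul {f₁ f₂ : ℝ → ℝ} (h₁ : IntegrableOn f₁ (Ioo 0 1))
    (h₂ : IntegrableOn f₂ (Ioo 0 1)) (γ₁ γ₂ : ℝ) {s : ℝ} (hs : s ∈ Icc (0:ℝ) 1) :
    ∫ t in 0..s, (γ₁ * f₁ t + γ₂ * f₂ t) = γ₁ * (∫ t in 0..s, f₁ t) + γ₂ * ∫ t in 0..s, f₂ t := by
  have h0 : (0:ℝ) ∈ Icc (0:ℝ) 1 := ⟨le_rfl, zero_le_one⟩
  rw [intervalIntegral.integral_add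
      ((intervalIntegrable_of_integrableOn_Ioo h₁ h0 hs).const_mul γ₁)
      ((intervalIntegrable_of_integrableOn_Ioo h₂ h0 hs).const_mul γ₂),
    intervalIntegral.integral_const_mul, intervalIntegral.integral_const_mul]

lemma mem_Icc_of_mem_simplex {K : ℕ} {q : Fin K → ℝ} (hq : q ∈ simplex K) (k : Fin K) :
    q k ∈ Icc (0:ℝ) 1 :=
  ⟨hq.1 k, hq.2 ▸ Finset.single_le_sum (fun j _ => hq.1 j) (Finset.mem_univ k)⟩

section GeneralizedInverse

/-- The paper's `F`. -/
noncomputable def genInv (H : ℝ → ℝ) (x : ℝ) : ℝ := sSup {t | t ∈ Ioo (0:ℝ) 1 ∧ H t ≤ x}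

variable {H : ℝ → ℝ} {t x : ℝ}

lemma bddAbove_sublevel : BddAbove {t | t ∈ Ioo (0:ℝ) 1 ∧ H t ≤ x} :=
  ⟨1, fun _ ht => ht.1.2.le⟩

lemma genInv_nonneg : 0 ≤ genInv H x := Real.sSup_nonneg fun _ ht => ht.1.1.le

lemma genInv_le_one : genInv H x ≤ 1 := Real.sSup_le (fun _ ht => ht.1.2.le) zero_le_one

lemma le_genInv (ht : t ∈ Ioo (0:ℝ) 1) (h : H t ≤ x) : t ≤ genInv H x :=
  le_csSup bddAbove_sublevel ⟨ht, h⟩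

lemma lt_of_genInv_lt (ht : t ∈ Ioo (0:ℝ) 1) (h : genInv H x < t) : x < H t :=
  not_le.mp fun h' => h.not_ge (le_genInv ht h')

lemma lt_of_lt_genInv (hH : StrictMonoOn H (Ioo 0 1)) (ht : t ∈ Ioo (0:ℝ) 1)
    (h : t < genInv H x) : H t < x := by
  have hne : {s | s ∈ Ioo (0:ℝ) 1 ∧ H s ≤ x}.Nonempty := by
    by_contra hne
    rw [not_nonempty_iff_eq_empty] at hne
    rw [genInv, hne, Real.sSup_empty] at h
    exact h.not_gt ht.1
  obtain ⟨s, ⟨hs, hsx⟩, hts⟩ := exists_lt_of_lt_csSup hne h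
  exact (hH ht hs hts).trans_le hsx

lemma genInv_mono : Monotone (genInv H) := fun a b hab => by
  rcases eq_empty_or_nonempty {t | t ∈ Ioo (0:ℝ) 1 ∧ H t ≤ a} with he | hne
  · rw [genInv, he, Real.sSup_empty]
    exact genInv_nonneg
  · exact csSup_le_csSup bddAbove_sublevel hne fun t ht => ⟨ht.1, ht.2.trans hab⟩

lemma genInv_apply_apply (hH : StrictMonoOn H (Ioo 0 1)) (ht : t ∈ Ioo (0:ℝ) 1) :
    genInv H (H t) = t :=
  le_antisymm (not_lt.mp fun h => (lt_of_lt_genInv hH ht h).false) (le_genInv ht le_rfl)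

/-- As a map into `[0,1]`, `genInv H` is monotone and takes every value in `(0,1)`. -/
lemma continuous_genInv (hH : StrictMonoOn H (Ioo 0 1)) : Continuous (genInv H) := by
  let F : ℝ → Icc (0:ℝ) 1 := fun x => ⟨genInv H x, genInv_nonneg, genInv_le_one⟩
  have hdense : Dense (((↑) : Icc (0:ℝ) 1 → ℝ) ⁻¹' Ioo 0 1) := by
    rw [Subtype.dense_iff, Subtype.image_preimage_coe,
      inter_eq_right.mpr Ioo_subset_Icc_self, closure_Ioo zero_ne_one]
  have hmono : Monotone F := fun a b hab => genInv_mono hab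
  have hF : Continuous F := hmono.continuous_of_denseRange
    (hdense.mono fun y hy => ⟨H y, Subtype.ext (genInv_apply_apply hH hy)⟩)
  exact continuous_subtype_val.comp hF

lemma volume_superlevel (hH : StrictMonoOn H (Ioo 0 1)) (x : ℝ) :
    volume {t | t ∈ Ioo (0:ℝ) 1 ∧ x ≤ H t} = ENNReal.ofReal (1 - genInv H x) := by
  apply le_antisymm
  · calc volume {t | t ∈ Ioo (0:ℝ) 1 ∧ x ≤ H t} ≤ volume (Icc (genInv H x) 1) :=
          measure_mono fun t ht =>
            ⟨not_lt.mp fun h => (lt_of_lt_genInv hH ht.1 h).not_ge ht.2, ht.1.2.le⟩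
      _ = _ := Real.volume_Icc
  · calc ENNReal.ofReal (1 - genInv H x) = volume (Ioo (genInv H x) 1) := Real.volume_Ioo.symm
      _ ≤ _ := by
          refine measure_mono fun t ht => ?_
          have ht' : t ∈ Ioo (0:ℝ) 1 := ⟨genInv_nonneg.trans_lt ht.1, ht.2⟩
          exact ⟨ht', (lt_of_genInv_lt ht' ht.1).le⟩

lemma integral_posPart_sub (hH : StrictMonoOn H (Ioo 0 1)) (hHi : IntegrableOn H (Ioo 0 1))
    (c : ℝ) :
    ∫ t in Ioo (0:ℝ) 1, max (c - H t) 0 = c * genInv H c - ∫ t in 0..genInv H c, H t := by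
  have hp : genInv H c ∈ Icc (0:ℝ) 1 := ⟨genInv_nonneg, genInv_le_one⟩
  have h0 : (0:ℝ) ∈ Icc (0:ℝ) 1 := ⟨le_rfl, zero_le_one⟩
  have h1 : (1:ℝ) ∈ Icc (0:ℝ) 1 := ⟨zero_le_one, le_rfl⟩
  have hf : IntegrableOn (fun t => max (c - H t) 0) (Ioo 0 1) :=
    ((integrable_const c).sub hHi).pos_part
  rw [← integral_Ioc_eq_integral_Ioo, ← intervalIntegral.integral_of_le zero_le_one,
    ← intervalIntegral.integral_add_adjacent_intervals
      (intervalIntegrable_of_integrableOn_Ioo hf h0 hp)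
      (intervalIntegrable_of_integrableOn_Ioo hf hp h1),
    intervalIntegral.integral_congr_Ioo_of_le genInv_le_one (g := fun _ => 0) fun t ht =>
      max_eq_right (sub_nonpos.mpr (lt_of_genInv_lt ⟨genInv_nonneg.trans_lt ht.1, ht.2⟩ ht.1).le),
    intervalIntegral.integral_congr_Ioo_of_le genInv_nonneg (g := fun t => c - H t) fun t ht =>
      max_eq_left (sub_nonneg.mpr
        (lt_of_lt_genInv hH ⟨ht.1, ht.2.trans_le genInv_le_one⟩ ht.2).le),
    intervalIntegral.integral_sub intervalIntegrable_const
      (intervalIntegrable_of_integrableOn_Ioo hHi h0 hp)]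
  simp [mul_comm]

/-- Subgradient inequality for the convex map `q ↦ ∫₀^q H` at `genInv H c`. -/
lemma mul_sub_genInv_le (hH : StrictMonoOn H (Ioo 0 1)) (hHi : IntegrableOn H (Ioo 0 1))
    (c : ℝ) {q : ℝ} (hq : q ∈ Icc (0:ℝ) 1) :
    (q - genInv H c) * c ≤ (∫ t in 0..q, H t) - ∫ t in 0..genInv H c, H t := by
  have hp : genInv H c ∈ Icc (0:ℝ) 1 := ⟨genInv_nonneg, genInv_le_one⟩
  have h0 : (0:ℝ) ∈ Icc (0:ℝ) 1 := ⟨le_rfl, zero_le_one⟩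
  rw [intervalIntegral.integral_interval_sub_left (intervalIntegrable_of_integrableOn_Ioo hHi h0 hq)
    (intervalIntegrable_of_integrableOn_Ioo hHi h0 hp)]
  rcases le_total (genInv H c) q with hpq | hqp
  · have := intervalIntegral.integral_mono_on_of_le_Ioo hpq intervalIntegrable_const
      (intervalIntegrable_of_integrableOn_Ioo hHi hp hq) fun t ht =>
        (lt_of_genInv_lt ⟨genInv_nonneg.trans_lt ht.1, ht.2.trans_le hq.2⟩ ht.1).le
    simpa [mul_comm] using this
  · have := intervalIntegral.integral_mono_on_of_le_Ioo hqp
      (intervalIntegrable_of_integrableOn_Ioo hHi hq hp) intervalIntegrable_const fun t ht =>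
        (lt_of_lt_genInv hH ⟨hq.1.trans_lt ht.1, ht.2.trans_le genInv_le_one⟩ ht.2).le
    rw [intervalIntegral.integral_symm]
    simp only [intervalIntegral.integral_const, smul_eq_mul] at this
    linarith

end GeneralizedInverse

section MarginalLaw

instance : IsProbabilityMeasure (volume.restrict (Ioo (0:ℝ) 1)) := ⟨by simp⟩

/-- The common marginal of the ambiguity set. -/
noncomputable def marginalLaw (H : ℝ → ℝ) : Measure ℝ :=
  (volume.restrict (Ioo (0:ℝ) 1)).map (fun t => -H t)

variable {H : ℝ → ℝ}

lemma aemeasurable_neg_of_strictMonoOn (hH : StrictMonoOn H (Ioo 0 1)) :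
    AEMeasurable (fun t => -H t) (volume.restrict (Ioo (0:ℝ) 1)) :=
  (aemeasurable_restrict_of_monotoneOn measurableSet_Ioo hH.monotoneOn).neg

lemma marginalLaw_Iic (hH : StrictMonoOn H (Ioo 0 1)) (s : ℝ) :
    marginalLaw H (Iic s) = ENNReal.ofReal (1 - genInv H (-s)) := by
  rw [marginalLaw, Measure.map_apply_of_aemeasurable (aemeasurable_neg_of_strictMonoOn hH)
    measurableSet_Iic, Measure.restrict_apply' measurableSet_Ioo, ← volume_superlevel hH]
  congr 1
  ext t
  simp [neg_le, and_comm]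

lemma integral_marginalLaw (hH : StrictMonoOn H (Ioo 0 1)) {f : ℝ → ℝ} (hf : Continuous f) :
    ∫ x, f x ∂marginalLaw H = ∫ t in Ioo (0:ℝ) 1, f (-H t) :=
  integral_map (aemeasurable_neg_of_strictMonoOn hH) hf.aestronglyMeasurable

variable {ι : Type*} {Q : Measure (ι → ℝ)} {k : ι}

lemma map_eval_eq_marginalLaw_iff (hH : StrictMonoOn H (Ioo 0 1)) [IsFiniteMeasure Q] :
    Q.map (fun z => z k) = marginalLaw H ↔
      ∀ s, Q {z | z k ≤ s} = ENNReal.ofReal (1 - genInv H (-s)) := by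
  have hmap : ∀ s, Q.map (fun z => z k) (Iic s) = Q {z | z k ≤ s} := fun s =>
    Measure.map_apply (measurable_pi_apply k) measurableSet_Iic
  refine ⟨fun h s => by rw [← hmap, h, marginalLaw_Iic hH], fun h => ?_⟩
  exact Measure.ext_of_Iic _ _ fun s => by rw [hmap, h, marginalLaw_Iic hH]

lemma integral_comp_eval (hH : StrictMonoOn H (Ioo 0 1))
    (hQk : Q.map (fun z => z k) = marginalLaw H) {f : ℝ → ℝ} (hf : Continuous f) :
    ∫ z, f (z k) ∂Q = ∫ t in Ioo (0:ℝ) 1, f (-H t) := by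
  rw [← integral_map (measurable_pi_apply k).aemeasurable hf.aestronglyMeasurable, hQk,
    integral_marginalLaw hH hf]

lemma integrable_eval (hH : StrictMonoOn H (Ioo 0 1)) (hHi : IntegrableOn H (Ioo 0 1))
    (hQk : Q.map (fun z => z k) = marginalLaw H) : Integrable (fun z => z k) Q := by
  have hlaw : Integrable id (marginalLaw H) :=
    (integrable_map_measure aestronglyMeasurable_id (aemeasurable_neg_of_strictMonoOn hH)).mpr
      hHi.neg
  rw [← hQk] at hlaw
  exact (integrable_map_measure aestronglyMeasurable_id
    (measurable_pi_apply k).aemeasurable).mp hlaw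

lemma integral_posPart_eval (hH : StrictMonoOn H (Ioo 0 1)) (hHi : IntegrableOn H (Ioo 0 1))
    (hQk : Q.map (fun z => z k) = marginalLaw H) (a v : ℝ) :
    ∫ z, max (a + z k - v) 0 ∂Q =
      (a - v) * genInv H (a - v) - ∫ t in 0..genInv H (a - v), H t := by
  rw [integral_comp_eval hH hQk (f := fun x => max (a + x - v) 0) (by fun_prop),
    ← integral_posPart_sub hH hHi]
  simp only [sub_eq_add_neg, add_right_comm]

end MarginalLaw

section Supremum

variable {ι : Type*}

lemma iSup_le_add_sum_posPart [Fintype ι] [Nonempty ι] (x : ι → ℝ) (v : ℝ) :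
    ⨆ i, x i ≤ v + ∑ i, max (x i - v) 0 :=
  ciSup_le fun i => by
    have := Finset.single_le_sum (f := fun j => max (x j - v) 0) (fun j _ => le_max_right _ _)
      (Finset.mem_univ i)
    linarith [le_max_left (x i - v) 0]

lemma iSup_eq_add_sum_posPart [Fintype ι] {x : ι → ℝ} {v : ℝ} (k : ι) (hk : v ≤ x k)
    (hj : ∀ j ≠ k, x j ≤ v) : ⨆ i, x i = v + ∑ i, max (x i - v) 0 := by
  have : Nonempty ι := ⟨k⟩
  rw [Finset.sum_eq_single k (fun j _ hjk => max_eq_right (sub_nonpos.mpr (hj j hjk)))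
    (by simp), max_eq_left (sub_nonneg.mpr hk), add_sub_cancel]
  refine le_antisymm (ciSup_le fun j => ?_) (le_ciSup (Finite.bddAbove_range x) k)
  by_cases hjk : j = k
  · rw [hjk]
  · exact (hj j hjk).trans hk

lemma abs_iSup_le_sum_abs [Fintype ι] [Nonempty ι] (x : ι → ℝ) : |⨆ i, x i| ≤ ∑ i, |x i| := by
  obtain ⟨i⟩ := ‹Nonempty ι›
  have hle : ∀ j, |x j| ≤ ∑ i, |x i| := fun j =>
    Finset.single_le_sum (fun i _ => abs_nonneg (x i)) (Finset.mem_univ j)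
  rw [abs_le]
  exact ⟨(neg_le_neg (hle i)).trans ((neg_abs_le _).trans (le_ciSup (Finite.bddAbove_range x) i)),
    ciSup_le fun j => (le_abs_self _).trans (hle j)⟩

variable {Q : Measure (ι → ℝ)} [IsProbabilityMeasure Q]
  (hint : ∀ k, Integrable (fun z => z k) Q) (u : ι → ℝ) (v : ℝ)
include hint

lemma integrable_posPart_add (k : ι) : Integrable (fun z => max (u k + z k - v) 0) Q :=
  (((integrable_const (u k)).add (hint k)).sub (integrable_const v)).pos_part

variable [Fintype ι]

lemma integrable_iSup_add [Nonempty ι] : Integrable (fun z => ⨆ k, u k + z k) Q :=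
  Integrable.mono' (g := fun z => ∑ k, |u k + z k|)
    (integrable_finsetSum _ fun k _ => ((integrable_const (u k)).add (hint k)).abs)
    (Measurable.iSup fun k => measurable_const.add (measurable_pi_apply k)).aestronglyMeasurable
    (ae_of_all _ fun z => by
      simpa only [Real.norm_eq_abs] using abs_iSup_le_sum_abs fun k => u k + z k)

lemma integrable_add_sum_posPart : Integrable (fun z => v + ∑ k, max (u k + z k - v) 0) Q :=
  (integrable_const v).add (integrable_finsetSum _ fun k _ => integrable_posPart_add hint u v k)

lemma integral_add_sum_posPart :
    ∫ z, (v + ∑ k, max (u k + z k - v) 0) ∂Q = v + ∑ k, ∫ z, max (u k + z k - v) 0 ∂Q := by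
  rw [integral_add (integrable_const v) (integrable_finsetSum _ fun k _ =>
    integrable_posPart_add hint u v k), integral_finsetSum _ fun k _ =>
    integrable_posPart_add hint u v k]
  simp

lemma integral_iSup_le [Nonempty ι] :
    ∫ z, ⨆ k, u k + z k ∂Q ≤ v + ∑ k, ∫ z, max (u k + z k - v) 0 ∂Q := by
  rw [← integral_add_sum_posPart hint]
  exact integral_mono (integrable_iSup_add hint u) (integrable_add_sum_posPart hint u v)
    fun z => iSup_le_add_sum_posPart _ v

lemma integral_iSup_eq
    (hae : (fun z => ⨆ k, u k + z k) =ᵐ[Q] fun z => v + ∑ k, max (u k + z k - v) 0) :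
    ∫ z, ⨆ k, u k + z k ∂Q = v + ∑ k, ∫ z, max (u k + z k - v) 0 ∂Q := by
  rw [integral_congr_ae hae, integral_add_sum_posPart hint]

end Supremum

section Coupling

/-- Rotation of the circle `ℝ/ℤ` by `-c`, read off on the fundamental domain `(0,1]`. -/
noncomputable def rot (c t : ℝ) : ℝ :=
  AddCircle.equivIoc (1 : ℝ) 0 ((t : UnitAddCircle) - (c : UnitAddCircle))

lemma measurePreserving_rot (c : ℝ) :
    MeasurePreserving (rot c) (volume.restrict (Ioo 0 1)) (volume.restrict (Ioo 0 1)) := by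
  rw [Measure.restrict_congr_set Ioo_ae_eq_Ioc]
  have h := (measurePreserving_subtype_coe (μa := volume) measurableSet_Ioc).comp
    (AddCircle.measurePreserving_equivIoc (T := 1) (a := 0) |>.comp
      ((measurePreserving_sub_right volume (c : UnitAddCircle)).comp
        (UnitAddCircle.measurePreserving_mk 0)))
  convert h using 2 <;> first | rfl | rw [zero_add]

lemma rot_of_lt {c t : ℝ} (h : c < t) (h' : t ≤ c + 1) : rot c t = t - c := by
  rw [rot, ← AddCircle.coe_sub, AddCircle.equivIoc_coe_of_mem]
  constructor <;> linarith

lemma rot_of_le {c t : ℝ} (h : t ≤ c) (h' : c < t + 1) : rot c t = t - c + 1 := by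
  rw [rot, ← AddCircle.coe_sub, ← AddCircle.coe_add_period, AddCircle.equivIoc_coe_of_mem]
  constructor <;> linarith

variable {K : ℕ} {p : Fin K → ℝ}

def partialSum (p : Fin K → ℝ) (n : ℕ) : ℝ := ∑ j : Fin K, if (j : ℕ) < n then p j else 0

lemma partialSum_zero : partialSum p 0 = 0 := by simp [partialSum]

lemma partialSum_card : partialSum p K = ∑ k, p k :=
  Finset.sum_congr rfl fun j _ => if_pos j.isLt

lemma partialSum_succ (k : Fin K) : partialSum p (k + 1) = partialSum p k + p k := by
  have hterm : ∀ j : Fin K, (if (j : ℕ) < k + 1 then p j else 0) =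
      (if (j : ℕ) < k then p j else 0) + if j = k then p j else 0 := fun j => by
    rcases lt_trichotomy (j : ℕ) k with h | h | h
    · simp [h, h.trans (Nat.lt_succ_self _), Fin.ne_of_lt h]
    · simp [Fin.ext h]
    · simp [h.not_gt, Nat.not_lt.mpr h, Fin.ne_of_gt h]
  simp only [partialSum, hterm, Finset.sum_add_distrib, Finset.sum_ite_eq', Finset.mem_univ,
    if_true]

lemma partialSum_nonneg (hp : ∀ k, 0 ≤ p k) (n : ℕ) : 0 ≤ partialSum p n :=
  Finset.sum_nonneg fun j _ => by split_ifs <;> simp [hp j]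

lemma partialSum_mono (hp : ∀ k, 0 ≤ p k) : Monotone (partialSum p) := fun m n hmn =>
  Finset.sum_le_sum fun j _ => by
    split_ifs with h₁ h₂ <;> first | exact le_rfl | exact hp j | omega

lemma partialSum_le_one (hp : p ∈ simplex K) {n : ℕ} (hn : n ≤ K) : partialSum p n ≤ 1 :=
  (partialSum_mono hp.1 hn).trans_eq (partialSum_card.trans hp.2)

lemma exists_mem_slab (hp : ∑ k, p k = 1) {t : ℝ} (ht : t ∈ Ioo (0:ℝ) 1)
    (htP : t ∉ range (partialSum p)) :
    ∃ k : Fin K, partialSum p k < t ∧ t < partialSum p (k + 1) := by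
  have ht' : t ∈ Ioc (partialSum p 0) (partialSum p K) := by
    rw [partialSum_zero, partialSum_card, hp]
    exact Ioo_subset_Ioc_self ht
  obtain ⟨i, hi, hti⟩ := mem_iUnion₂.mp (Ioc_subset_biUnion_Ioc K (partialSum p) ht')
  exact ⟨⟨i, Finset.mem_range.mp hi⟩, hti.1, hti.2.lt_of_ne fun h => htP ⟨_, h.symm⟩⟩

lemma rot_mem_Ioo_of_mem_slab (hp : p ∈ simplex K) {k : Fin K} {t : ℝ}
    (h₁ : partialSum p k < t) (h₂ : t < partialSum p (k + 1)) :
    rot (partialSum p k) t ∈ Ioo 0 (p k) := by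
  have := partialSum_succ (p := p) k
  have := partialSum_le_one hp k.isLt
  have := partialSum_nonneg hp.1 k
  rw [rot_of_lt h₁ (by linarith)]
  constructor <;> linarith

lemma rot_mem_Ioo_of_ne_of_mem_slab (hp : p ∈ simplex K) {j k : Fin K} (hjk : j ≠ k) {t : ℝ}
    (ht : t ∈ Ioo (0:ℝ) 1) (htP : t ∉ range (partialSum p))
    (h₁ : partialSum p k < t) (h₂ : t < partialSum p (k + 1)) :
    rot (partialSum p j) t ∈ Ioo (p j) 1 := by
  have := partialSum_succ (p := p) j
  have := partialSum_le_one hp j.isLt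
  have := partialSum_nonneg hp.1 j
  have := hp.1 j
  -- either slab `j` lies below `t`, or the rotation wraps `t` around
  rcases lt_or_ge (partialSum p j) t with hlt | hge
  · have hjk' : (j : ℕ) + 1 ≤ k := by
      by_contra h
      have := partialSum_mono hp.1
        (show (k : ℕ) + 1 ≤ j by have := Fin.val_ne_of_ne hjk; omega)
      linarith
    have := partialSum_mono hp.1 hjk'
    rw [rot_of_lt hlt (by linarith [ht.2])]
    constructor <;> linarith [ht.2]
  · have hlt : t < partialSum p j := hge.lt_of_ne fun h => htP ⟨j, h.symm⟩
    rw [rot_of_le hge (by linarith [ht.1])]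
    constructor <;> linarith [ht.1]

variable {H : ℝ → ℝ}

/-- Coordinate `k` rotates the uniform variable so that the slab
`(partialSum p k, partialSum p (k + 1))` lands on `(0, p k)`. -/
noncomputable def coupling (H : ℝ → ℝ) (p : Fin K → ℝ) : Measure (Fin K → ℝ) :=
  (volume.restrict (Ioo (0:ℝ) 1)).map fun t (k : Fin K) => -H (rot (partialSum p k) t)

lemma aemeasurable_coupling (hH : StrictMonoOn H (Ioo 0 1)) (p : Fin K → ℝ) :
    AEMeasurable (fun t (k : Fin K) => -H (rot (partialSum p k) t))
      (volume.restrict (Ioo (0:ℝ) 1)) :=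
  aemeasurable_pi_lambda _ fun _ =>
    (aemeasurable_neg_of_strictMonoOn hH).comp_quasiMeasurePreserving
      (measurePreserving_rot _).quasiMeasurePreserving

lemma isProbabilityMeasure_coupling (hH : StrictMonoOn H (Ioo 0 1)) (p : Fin K → ℝ) :
    IsProbabilityMeasure (coupling H p) :=
  Measure.isProbabilityMeasure_map (aemeasurable_coupling hH p)

lemma map_eval_coupling (hH : StrictMonoOn H (Ioo 0 1)) (p : Fin K → ℝ) (k : Fin K) :
    (coupling H p).map (fun z => z k) = marginalLaw H := by
  have hrot := measurePreserving_rot (partialSum p k)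
  rw [coupling, AEMeasurable.map_map_of_aemeasurable (measurable_pi_apply k).aemeasurable
    (aemeasurable_coupling hH p)]
  calc _ = ((volume.restrict (Ioo (0:ℝ) 1)).map (rot (partialSum p k))).map (fun t => -H t) := by
        rw [AEMeasurable.map_map_of_aemeasurable
          (by rw [hrot.map_eq]; exact aemeasurable_neg_of_strictMonoOn hH)
          hrot.measurable.aemeasurable]
        rfl
    _ = marginalLaw H := by rw [hrot.map_eq, marginalLaw]

lemma iSup_ae_eq_coupling (hH : StrictMonoOn H (Ioo 0 1)) {u : Fin K → ℝ} {v : ℝ}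
    (hv : ∑ k, genInv H (u k - v) = 1) :
    (fun z => ⨆ k, u k + z k) =ᵐ[coupling H fun k => genInv H (u k - v)]
      fun z => v + ∑ k, max (u k + z k - v) 0 := by
  set p : Fin K → ℝ := fun k => genInv H (u k - v)
  have hp : p ∈ simplex K := ⟨fun _ => genInv_nonneg, hv⟩
  rw [EventuallyEq, coupling, ae_map_iff (aemeasurable_coupling hH p)
    (measurableSet_eq_fun (Measurable.iSup fun k => by fun_prop) (by fun_prop))]
  filter_upwards [ae_restrict_mem measurableSet_Ioo,
    (countable_range (partialSum p)).ae_notMem _] with t ht htP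
  obtain ⟨k, hk₁, hk₂⟩ := exists_mem_slab hp.2 ht htP
  refine iSup_eq_add_sum_posPart k ?_ fun j hjk => ?_
  · have hr := rot_mem_Ioo_of_mem_slab hp hk₁ hk₂
    linarith [lt_of_lt_genInv hH ⟨hr.1, hr.2.trans_le genInv_le_one⟩ hr.2]
  · have hr := rot_mem_Ioo_of_ne_of_mem_slab hp hjk ht htP hk₁ hk₂
    linarith [lt_of_genInv_lt ⟨genInv_nonneg.trans_lt hr.1, hr.2⟩ hr.1]

end Coupling

section Duality

variable {H : ℝ → ℝ} {K : ℕ}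

lemma exists_sum_genInv_eq_one (hH : StrictMonoOn H (Ioo 0 1)) (hK : 2 ≤ K) (u : Fin K → ℝ) :
    ∃ v, ∑ k, genInv H (u k - v) = 1 := by
  have hne : (Finset.univ : Finset (Fin K)).Nonempty := ⟨⟨0, by omega⟩, Finset.mem_univ _⟩
  have hK' : (2:ℝ) ≤ K := by exact_mod_cast hK
  have hs : 1 / ((K:ℝ) + 1) ∈ Ioo (0:ℝ) 1 := ⟨by positivity, by rw [div_lt_one] <;> linarith⟩
  have hhalf : (1 / 2 : ℝ) ∈ Ioo (0:ℝ) 1 := by norm_num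
  have hhi : ∑ k, genInv H (u k - (Finset.univ.sup' hne u - H (1 / (K + 1)))) ≤ 1 :=
    calc _ ≤ ∑ _k : Fin K, 1 / ((K:ℝ) + 1) := Finset.sum_le_sum fun k _ =>
          (genInv_mono (by linarith [Finset.le_sup' u (Finset.mem_univ k)])).trans_eq
            (genInv_apply_apply hH hs)
      _ ≤ 1 := by
          rw [Finset.sum_const, Finset.card_univ, Fintype.card_fin, nsmul_eq_mul, mul_one_div,
            div_le_one (by positivity)]
          linarith
  have hlo : 1 ≤ ∑ k, genInv H (u k - (Finset.univ.inf' hne u - H (1 / 2))) :=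
    calc (1:ℝ) ≤ ∑ _k : Fin K, 1 / 2 := by
          rw [Finset.sum_const, Finset.card_univ, Fintype.card_fin, nsmul_eq_mul]
          linarith
      _ ≤ _ := Finset.sum_le_sum fun k _ => (genInv_apply_apply hH hhalf).symm.trans_le
          (genInv_mono (by linarith [Finset.inf'_le u (Finset.mem_univ k)]))
  exact intermediate_value_univ _ _ (continuous_finsetSum _ fun k _ =>
    (continuous_genInv hH).comp (continuous_const.sub continuous_id)) ⟨hhi, hlo⟩

lemma isMaxOn_genInv (hH : StrictMonoOn H (Ioo 0 1)) (hHi : IntegrableOn H (Ioo 0 1))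
    {u : Fin K → ℝ} {v : ℝ} (hv : ∑ k, genInv H (u k - v) = 1) :
    IsMaxOn (fun q => ∑ k, u k * q k - ∑ k, ∫ t in 0..q k, H t) (simplex K)
      fun k => genInv H (u k - v) := by
  refine isMaxOn_iff.mpr fun q hq => ?_
  have hgap := Finset.sum_le_sum fun k (_ : k ∈ Finset.univ) =>
    mul_sub_genInv_le hH hHi (u k - v) (mem_Icc_of_mem_simplex hq k)
  have hterm : ∀ k, (q k - genInv H (u k - v)) * (u k - v) =
      (u k * q k - u k * genInv H (u k - v)) - v * (q k - genInv H (u k - v)) := fun k => by ring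
  simp only [hterm, Finset.sum_sub_distrib, ← Finset.mul_sum, hq.2, hv, sub_self, mul_zero,
    sub_zero] at hgap
  linarith

lemma mem_marginalSet_iff (hH : StrictMonoOn H (Ioo 0 1)) {Fk : Fin K → ℝ → ℝ}
    (hFk : ∀ k s, Fk k s = min 1 (max 0 (1 - genInv H (-s)))) {Q : Measure (Fin K → ℝ)} :
    Q ∈ marginalSet Fk ↔
      IsProbabilityMeasure Q ∧ ∀ k, Q.map (fun z => z k) = marginalLaw H := by
  have hF : ∀ k s, Fk k s = 1 - genInv H (-s) := fun k s => by
    rw [hFk, max_eq_right (sub_nonneg.mpr genInv_le_one),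
      min_eq_right (sub_le_self _ genInv_nonneg)]
  simp only [marginalSet, mem_ofPred_eq, hF]
  exact and_congr_right fun _ => forall_congr' fun _ => (map_eval_eq_marginalLaw_iff hH).symm

lemma coupling_mem_marginalSet (hH : StrictMonoOn H (Ioo 0 1)) {Fk : Fin K → ℝ → ℝ}
    (hFk : ∀ k s, Fk k s = min 1 (max 0 (1 - genInv H (-s)))) (p : Fin K → ℝ) :
    coupling H p ∈ marginalSet Fk :=
  (mem_marginalSet_iff hH hFk).mpr ⟨isProbabilityMeasure_coupling hH p, map_eval_coupling hH p⟩

theorem exists_isMaxOn_and_Phi_eq_of_one (hH : StrictMonoOn H (Ioo 0 1))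
    (hHi : IntegrableOn H (Ioo 0 1)) {Fk : Fin 1 → ℝ → ℝ}
    (hFk : ∀ k s, Fk k s = min 1 (max 0 (1 - genInv H (-s)))) (u : Fin 1 → ℝ) :
    ∃ p ∈ simplex 1,
      IsMaxOn (fun q => ∑ k, u k * q k - ∑ k, ∫ t in 0..q k, H t) (simplex 1) p ∧
      Phi Fk u = ∑ k, u k * p k - ∑ k, ∫ t in 0..p k, H t := by
  have hsimplex : ∀ q ∈ simplex 1, q = fun _ => 1 := fun q hq => funext fun k => by
    rw [Subsingleton.elim k 0]
    simpa using hq.2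
  have hvalue : ∀ Q ∈ marginalSet Fk,
      ∫ z, ⨆ k, u k + z k ∂Q = ∑ k, u k * 1 - ∑ k : Fin 1, ∫ t in 0..1, H t := by
    intro Q hQ
    obtain ⟨_, hQk⟩ := (mem_marginalSet_iff hH hFk).mp hQ
    simp only [ciSup_unique, Fin.default_eq_zero, Fin.sum_univ_one, mul_one]
    rw [integral_add (integrable_const _) (integrable_eval hH hHi (hQk 0)), integral_const,
      integral_comp_eval hH (hQk 0) (f := fun x => x) continuous_id, integral_neg,
      intervalIntegral.integral_of_le zero_le_one, integral_Ioc_eq_integral_Ioo]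
    simp [sub_eq_add_neg]
  refine ⟨fun _ => 1, ⟨fun _ => zero_le_one, by simp⟩,
    isMaxOn_iff.mpr fun q hq => by rw [hsimplex q hq], ?_⟩
  have hcoupling := coupling_mem_marginalSet hH hFk fun _ => 1
  exact IsGreatest.csSup_eq ⟨⟨_, hcoupling, (hvalue _ hcoupling).symm⟩,
    by rintro _ ⟨Q, hQ, rfl⟩; exact (hvalue Q hQ).le⟩

variable {Fk : Fin K → ℝ → ℝ}

theorem exists_isMaxOn_and_Phi_eq_of_two_le (hH : StrictMonoOn H (Ioo 0 1))
    (hHi : IntegrableOn H (Ioo 0 1)) (hK : 2 ≤ K)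
    (hFk : ∀ k s, Fk k s = min 1 (max 0 (1 - genInv H (-s)))) (u : Fin K → ℝ) :
    ∃ p ∈ simplex K,
      IsMaxOn (fun q => ∑ k, u k * q k - ∑ k, ∫ t in 0..q k, H t) (simplex K) p ∧
      Phi Fk u = ∑ k, u k * p k - ∑ k, ∫ t in 0..p k, H t := by
  obtain ⟨v, hv⟩ := exists_sum_genInv_eq_one hH hK u
  set p : Fin K → ℝ := fun k => genInv H (u k - v)
  have : Nonempty (Fin K) := ⟨⟨0, by omega⟩⟩
  have hvalue : ∀ Q : Measure (Fin K → ℝ), (∀ k, Q.map (fun z => z k) = marginalLaw H) →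
      v + ∑ k, ∫ z, max (u k + z k - v) 0 ∂Q = ∑ k, u k * p k - ∑ k, ∫ t in 0..p k, H t := by
    intro Q hQ
    have hterm : ∀ k, (u k - v) * p k - ∫ t in 0..p k, H t =
        (u k * p k - ∫ t in 0..p k, H t) - v * p k := fun k => by ring
    simp only [integral_posPart_eval hH hHi (hQ _), hterm, Finset.sum_sub_distrib,
      ← Finset.mul_sum, p, hv]
    ring
  have hcoupling := coupling_mem_marginalSet hH hFk p
  obtain ⟨_, hQ₀⟩ := (mem_marginalSet_iff hH hFk).mp hcoupling
  refine ⟨p, ⟨fun _ => genInv_nonneg, hv⟩, isMaxOn_genInv hH hHi hv,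
    IsGreatest.csSup_eq ⟨⟨coupling H p, hcoupling, ?_⟩, ?_⟩⟩
  · rw [integral_iSup_eq (fun k => integrable_eval hH hHi (hQ₀ k)) u v (iSup_ae_eq_coupling hH hv),
      hvalue _ hQ₀]
  · rintro _ ⟨Q, hQ, rfl⟩
    obtain ⟨_, hQk⟩ := (mem_marginalSet_iff hH hFk).mp hQ
    exact (integral_iSup_le (fun k => integrable_eval hH hHi (hQk k)) u v).trans_eq (hvalue Q hQk)

theorem exists_isMaxOn_and_Phi_eq (hH : StrictMonoOn H (Ioo 0 1))
    (hHi : IntegrableOn H (Ioo 0 1)) (hK : 1 ≤ K)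
    (hFk : ∀ k s, Fk k s = min 1 (max 0 (1 - genInv H (-s)))) (u : Fin K → ℝ) :
    ∃ p ∈ simplex K,
      IsMaxOn (fun q => ∑ k, u k * q k - ∑ k, ∫ t in 0..q k, H t) (simplex K) p ∧
      Phi Fk u = ∑ k, u k * p k - ∑ k, ∫ t in 0..p k, H t := by
  obtain rfl | hK2 : K = 1 ∨ 2 ≤ K := by omega
  · exact exists_isMaxOn_and_Phi_eq_of_one hH hHi hFk u
  · exact exists_isMaxOn_and_Phi_eq_of_two_le hH hHi hK2 hFk u

end Duality

end HybridFrechet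

open HybridFrechet

theorem stmt12_general (K : ℕ) (hK : 1 ≤ K) (G₁ G₂ : ℝ → ℝ)
    -- `G₁` and `G₂` are marginal generators:
    (hG₁mono : StrictMono G₁) (hG₁diff : Differentiable ℝ G₁)
    (hG₁bot : ∀ ε > (0:ℝ), ∃ s, G₁ s < ε) (hG₁top : ∀ ε > (0:ℝ), ∃ s, 1 - ε < G₁ s)
    (hG₁int : IntegrableOn (quantile G₁) (Ioo (0:ℝ) 1))
    (hG₂mono : StrictMono G₂) (hG₂diff : Differentiable ℝ G₂)
    (hG₂bot : ∀ ε > (0:ℝ), ∃ s, G₂ s < ε) (hG₂top : ∀ ε > (0:ℝ), ∃ s, 1 - ε < G₂ s)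
    (hG₂int : IntegrableOn (quantile G₂) (Ioo (0:ℝ) 1))
    (γ₁ γ₂ : ℝ) (hγ₁ : 0 < γ₁) (hγ₂ : 0 < γ₂)
    -- `H = γ₁ G₁⁻¹ + γ₂ G₂⁻¹` and its generalized inverse `F`:
    (H : ℝ → ℝ) (hH : ∀ t, H t = γ₁ * quantile G₁ t + γ₂ * quantile G₂ t)
    (F : ℝ → ℝ) (hF : ∀ x, F x = sSup {t | t ∈ Ioo (0:ℝ) 1 ∧ H t ≤ x})
    -- the marginal CDFs of the induced ambiguity set:
    (Fk : Fin K → ℝ → ℝ) (hFk : ∀ k s, Fk k s = min 1 (max 0 (1 - F (-s))))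
    -- the two regularizer pieces:
    (g₁ g₂ : ℝ → ℝ)
    (hg₁ : ∀ s ∈ Icc (0:ℝ) 1, g₁ s = ∫ t in (0:ℝ)..s, quantile G₁ t)
    (hg₂ : ∀ s ∈ Icc (0:ℝ) 1, g₂ s = ∫ t in (0:ℝ)..s, quantile G₂ t) :
    StrictMonoOn H (Ioo (0:ℝ) 1) ∧
    ∀ u : Fin K → ℝ, ∃ p, p ∈ simplex K ∧
      IsMaxOn (fun q => ∑ k, u k * q k - ∑ k, (γ₁ * g₁ (q k) + γ₂ * g₂ (q k)))
        (simplex K) p ∧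
      Phi Fk u = ∑ k, u k * p k - ∑ k, (γ₁ * g₁ (p k) + γ₂ * g₂ (p k)) := by
  have hq₁ := strictMonoOn_quantile hG₁mono hG₁diff.continuous hG₁bot hG₁top
  have hq₂ := strictMonoOn_quantile hG₂mono hG₂diff.continuous hG₂bot hG₂top
  have hHmono : StrictMonoOn H (Ioo (0:ℝ) 1) := fun x hx y hy hxy => by
    rw [hH, hH]
    exact add_lt_add (mul_lt_mul_of_pos_left (hq₁ hx hy hxy) hγ₁)
      (mul_lt_mul_of_pos_left (hq₂ hx hy hxy) hγ₂)
  have hHi : IntegrableOn H (Ioo (0:ℝ) 1) := by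
    rw [funext hH]
    exact (hG₁int.const_mul γ₁).add (hG₂int.const_mul γ₂)
  have hreg : ∀ q ∈ simplex K,
      ∑ k, (γ₁ * g₁ (q k) + γ₂ * g₂ (q k)) = ∑ k, ∫ t in 0..q k, H t := fun q hq =>
    Finset.sum_congr rfl fun k _ => by
      have hs := mem_Icc_of_mem_simplex hq k
      simp only [hg₁ _ hs, hg₂ _ hs, hH]
      exact (integral_const_mul_add_const_mul hG₁int hG₂int γ₁ γ₂ hs).symm
  obtain rfl : F = genInv H := funext hF
  refine ⟨hHmono, fun u => ?_⟩
  obtain ⟨p, hp, hmax, hPhi⟩ := exists_isMaxOn_and_Phi_eq hHmono hHi hK hFk u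
  refine ⟨p, hp, isMaxOn_iff.mpr fun q hq => ?_, by rw [hPhi, hreg p hp]⟩
  rw [hreg q hq, hreg p hp]
  exact isMaxOn_iff.mp hmax q hq

theorem stmt12 (K : ℕ) (hK : 1 ≤ K) (G₁ G₂ : ℝ → ℝ)
    -- `G₁` and `G₂` are marginal generators:
    (hG₁mono : StrictMono G₁) (hG₁diff : Differentiable ℝ G₁)
    (hG₁bot : ∀ ε > (0:ℝ), ∃ s, G₁ s < ε) (hG₁top : ∀ ε > (0:ℝ), ∃ s, 1 - ε < G₁ s)
    (hG₁int : IntegrableOn (quantile G₁) (Ioo (0:ℝ) 1))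
    (hG₁zero : ∫ t in (0:ℝ)..1, quantile G₁ t = 0)
    (hG₂mono : StrictMono G₂) (hG₂diff : Differentiable ℝ G₂)
    (hG₂bot : ∀ ε > (0:ℝ), ∃ s, G₂ s < ε) (hG₂top : ∀ ε > (0:ℝ), ∃ s, 1 - ε < G₂ s)
    (hG₂int : IntegrableOn (quantile G₂) (Ioo (0:ℝ) 1))
    (hG₂zero : ∫ t in (0:ℝ)..1, quantile G₂ t = 0)
    (γ₁ γ₂ : ℝ) (hγ₁ : 0 < γ₁) (hγ₂ : 0 < γ₂)
    -- `H = γ₁ G₁⁻¹ + γ₂ G₂⁻¹` and its generalized inverse `F`: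
    (H : ℝ → ℝ) (hH : ∀ t, H t = γ₁ * quantile G₁ t + γ₂ * quantile G₂ t)
    (F : ℝ → ℝ) (hF : ∀ x, F x = sSup {t | t ∈ Ioo (0:ℝ) 1 ∧ H t ≤ x})
    -- the marginal CDFs of the induced ambiguity set:
    (Fk : Fin K → ℝ → ℝ) (hFk : ∀ k s, Fk k s = min 1 (max 0 (1 - F (-s))))
    -- the two regularizer pieces:
    (g₁ g₂ : ℝ → ℝ)
    (hg₁ : ∀ s ∈ Icc (0:ℝ) 1, g₁ s = ∫ t in (0:ℝ)..s, quantile G₁ t)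
    (hg₂ : ∀ s ∈ Icc (0:ℝ) 1, g₂ s = ∫ t in (0:ℝ)..s, quantile G₂ t) :
    StrictMonoOn H (Ioo (0:ℝ) 1) ∧
    ∀ u : Fin K → ℝ, ∃ p, p ∈ simplex K ∧
      IsMaxOn (fun q => ∑ k, u k * q k - ∑ k, (γ₁ * g₁ (q k) + γ₂ * g₂ (q k)))
        (simplex K) p ∧
      Phi Fk u = ∑ k, u k * p k - ∑ k, (γ₁ * g₁ (p k) + γ₂ * g₂ (p k)) :=
  stmt12_general K hK G₁ G₂ hG₁mono hG₁diff hG₁bot hG₁top hG₁int hG₂mono hG₂diff hG₂bot hG₂top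
    hG₂int γ₁ γ₂ hγ₁ hγ₂ H hH F hF Fk hFk g₁ g₂ hg₁ hg₂
end

section
/- Let F : ℝ → [0,1] be a nondecreasing, L-Lipschitz continuous cumulative distribution function (i.e., lim_{s→−∞} F(s) = 0 and lim_{s→+∞} F(s) = 1). Then the map p ↦ −F^{-1}(1−p) − p/L is nondecreasing on (0,1); equivalently, for all 0 < q < p < 1 one has F^{-1}(1−q) − F^{-1}(1−p) ≥ (p − q)/L. -/
/-!
Write `x_a` for `quantile F a`. Points left of `x_a` have `F < a`, so continuity gives
`F x_a ≤ a`; every `t` with `b ≤ F t` lies right of `x_a`, hence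
`b - a ≤ F t - F x_a ≤ L (t - x_a)`, and taking the infimum over such `t` gives
`x_a + (b - a) / L ≤ x_b`.
-/

open Set Filter Topology

section Quantile

variable {F : ℝ → ℝ} {L a b : ℝ}

lemma bddBelow_setOf_le_of_tendsto_atBot {c : ℝ} (hbot : Tendsto F atBot (𝓝 c)) (hca : c < a) :
    BddBelow {t | a ≤ F t} := by
  obtain ⟨x, hx⟩ := eventually_atBot.mp (hbot.eventually (eventually_lt_nhds hca))
  exact ⟨x, fun t ht => le_of_not_ge fun htx => (hx t htx).not_ge ht⟩

lemma nonempty_setOf_le_of_tendsto_atTop {c : ℝ} (htop : Tendsto F atTop (𝓝 c)) (hac : a < c) :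
    {t | a ≤ F t}.Nonempty := by
  obtain ⟨t, ht⟩ := (htop.eventually (eventually_gt_nhds hac)).exists
  exact ⟨t, ht.le⟩

lemma apply_quantile_le (hF : Continuous F) (hbdd : BddBelow {t | a ≤ F t}) :
    F (quantile F a) ≤ a := by
  have hbelow : ∀ x ∈ Iio (quantile F a), F x ≤ a := fun x hx =>
    le_of_not_ge fun hax => (mem_Iio.mp hx).not_ge (csInf_le hbdd hax)
  exact le_of_tendsto (hF.continuousAt.tendsto.mono_left nhdsWithin_le_nhds)
    (eventually_nhdsWithin_of_forall hbelow)

lemma quantile_add_div_le_quantile (hlip : ∀ s t : ℝ, |F s - F t| ≤ L * |s - t|)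
    (hbdd : BddBelow {t | a ≤ F t}) (hne : {t | b ≤ F t}.Nonempty) (hab : a ≤ b) :
    quantile F a + (b - a) / L ≤ quantile F b := by
  have hF : Continuous F :=
    (LipschitzWith.of_dist_le' fun s t => by simpa only [Real.dist_eq] using hlip s t).continuous
  refine le_csInf hne fun t (ht : b ≤ F t) => ?_
  have hqt : quantile F a ≤ t := csInf_le hbdd (hab.trans ht)
  have hrise : b - a ≤ L * (t - quantile F a) := by
    have h := hlip t (quantile F a)
    rw [abs_of_nonneg (sub_nonneg.mpr hqt)] at h
    linarith [apply_quantile_le hF hbdd, le_abs_self (F t - F (quantile F a))]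
  suffices (b - a) / L ≤ t - quantile F a by linarith
  rcases le_or_gt L 0 with hL | hL
  · exact (div_nonpos_of_nonneg_of_nonpos (sub_nonneg.mpr hab) hL).trans (sub_nonneg.mpr hqt)
  · rwa [div_le_iff₀ hL, mul_comm]

end Quantile

theorem stmt14_general (F : ℝ → ℝ) (L : ℝ)
    (hbot : Tendsto F atBot (nhds 0))
    (htop : Tendsto F atTop (nhds 1))
    (hlip : ∀ s t : ℝ, |F s - F t| ≤ L * |s - t|) :
    MonotoneOn (fun p => -quantile F (1 - p) - p / L) (Ioo (0:ℝ) 1) ∧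
    ∀ q p : ℝ, 0 < q → q < p → p < 1 →
      (p - q) / L ≤ quantile F (1 - q) - quantile F (1 - p) := by
  have quantile_gap : ∀ q p : ℝ, 0 < q → q ≤ p → p < 1 →
      (p - q) / L ≤ quantile F (1 - q) - quantile F (1 - p) := fun q p hq hqp hp => by
    have h := quantile_add_div_le_quantile hlip
      (bddBelow_setOf_le_of_tendsto_atBot hbot (by linarith : (0:ℝ) < 1 - p))
      (nonempty_setOf_le_of_tendsto_atTop htop (by linarith : 1 - q < 1))
      (by linarith : 1 - p ≤ 1 - q)
    rw [sub_sub_sub_cancel_left] at h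
    linarith
  refine ⟨fun q hq p hp hqp => ?_, fun q p hq hqp hp => quantile_gap q p hq hqp.le hp⟩
  have h := quantile_gap q p hq.1 hqp hp.2
  rw [sub_div] at h
  linarith

theorem stmt14 (F : ℝ → ℝ) (L : ℝ) (hL : 0 < L)
    (hmono : Monotone F)
    (h01 : ∀ s, F s ∈ Icc (0:ℝ) 1)
    (hbot : Tendsto F atBot (nhds 0))
    (htop : Tendsto F atTop (nhds 1))
    (hlip : ∀ s t : ℝ, |F s - F t| ≤ L * |s - t|) :
    MonotoneOn (fun p => -quantile F (1 - p) - p / L) (Ioo (0:ℝ) 1) ∧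
    ∀ q p : ℝ, 0 < q → q < p → p < 1 →
      (p - q) / L ≤ quantile F (1 - q) - quantile F (1 - p) :=
  stmt14_general F L hbot htop hlip
end

section
/- Let K ≥ 1, L > 0, and let F_1,…,F_K : ℝ → [0,1] be nondecreasing, L-Lipschitz continuous cumulative distribution functions whose quantile functions F_k^{-1} are Lebesgue integrable on (0,1). Then the regularization function ψ(p) = −Σ_{k=1}^K ∫_{1−p_k}^1 F_k^{-1}(t) dt is convex and continuous on [0,1]^K, and moreover p ↦ ψ(p) − ‖p‖_2²/(2L) is convex on [0,1]^K; that is, ψ is strongly convex on [0,1]^K with parameter 1/L. -/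
/-!
An `L`-Lipschitz distribution function needs a step of length at least `(t - s) / L` to climb
from level `s` to level `t`, so `s ↦ F⁻¹(s) - s / L` is nondecreasing on `(0, 1)`. After the
substitution `u = 1 - t`, each summand of `ψ(p) - ‖p‖² / (2L)` is therefore the primitive of a
nondecreasing function of `p k`, hence convex. Adding back the convex `‖p‖² / (2L)` gives
convexity of `ψ`, and continuity holds because the summands are primitives of integrable functions.
-/

open Set Filter MeasureTheory

/-- The regularizer `ψ(p) = −∑ₖ ∫_{1−pₖ}^1 Fₖ⁻¹(t) dt`. -/
noncomputable def reg {K : ℕ} (F : Fin K → ℝ → ℝ) (p : Fin K → ℝ) : ℝ :=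
  -∑ k, ∫ t in (1 - p k)..1, quantile (F k) t

theorem ConvexOn.finsetSum {𝕜 E β ι : Type*} [Semiring 𝕜] [PartialOrder 𝕜] [AddCommMonoid E]
    [SMul 𝕜 E] [AddCommMonoid β] [PartialOrder β] [IsOrderedAddMonoid β] [Module 𝕜 β]
    {s : Set E} (hs : Convex 𝕜 s) {t : Finset ι} {f : ι → E → β}
    (hf : ∀ i ∈ t, ConvexOn 𝕜 s (f i)) : ConvexOn 𝕜 s (fun x => ∑ i ∈ t, f i x) := by
  classical
  induction t using Finset.induction_on with
  | empty => simpa using convexOn_const (0 : β) hs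
  | insert i t hi ih =>
    simp_rw [Finset.sum_insert hi]
    exact (hf i (t.mem_insert_self i)).add (ih fun j hj => hf j (Finset.mem_insert_of_mem hj))

theorem convexOn_sum_apply {𝕜 β ι : Type*} [Fintype ι] [Semiring 𝕜] [PartialOrder 𝕜]
    [AddCommMonoid β] [PartialOrder β] [IsOrderedAddMonoid β] [Module 𝕜 β]
    {s : Set 𝕜} (hs : Convex 𝕜 s) {f : ι → 𝕜 → β} (hf : ∀ i, ConvexOn 𝕜 s (f i)) :
    ConvexOn 𝕜 (univ.pi fun _ => s) (fun p => ∑ i, f i (p i)) := by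
  have hpi : Convex 𝕜 (univ.pi fun _ : ι => s) := convex_pi fun _ _ => hs
  refine ConvexOn.finsetSum hpi fun i _ => ?_
  exact ((hf i).comp_linearMap (LinearMap.proj i)).subset
    (fun _ hp => by exact hp i (mem_univ i)) hpi

theorem convexOn_primitive_of_monotoneOn {m : ℝ → ℝ} {a b : ℝ}
    (hint : IntervalIntegrable m volume a b) (hmono : MonotoneOn m (Ioo a b)) :
    ConvexOn ℝ (Icc a b) (fun x => ∫ u in a..x, m u) := by
  have hsub : ∀ {c d}, c ∈ Icc a b → d ∈ Icc a b → IntervalIntegrable m volume c d :=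
    fun hc hd => hint.mono_set
      (uIcc_subset_uIcc (mem_uIcc_of_le hc.1 hc.2) (mem_uIcc_of_le hd.1 hd.2))
  refine convexOn_of_slope_mono_adjacent (convex_Icc a b) fun {x y z} hx hz hxy hyz => ?_
  have hy : y ∈ Ioo a b := ⟨hx.1.trans_lt hxy, hyz.trans_le hz.2⟩
  have hyI : y ∈ Icc a b := Ioo_subset_Icc_self hy
  -- `m y` separates the mean of `m` over `[x, y]` from its mean over `[y, z]`.
  have hleft : ∫ u in x..y, m u ≤ (y - x) * m y := by
    calc ∫ u in x..y, m u ≤ ∫ _ in x..y, m y :=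
          intervalIntegral.integral_mono_on_of_le_Ioo hxy.le (hsub hx hyI) intervalIntegrable_const
            fun u hu => hmono ⟨hx.1.trans_lt hu.1, hu.2.trans hy.2⟩ hy hu.2.le
      _ = (y - x) * m y := by simp
  have hright : (z - y) * m y ≤ ∫ u in y..z, m u := by
    calc (z - y) * m y = ∫ _ in y..z, m y := by simp
      _ ≤ ∫ u in y..z, m u :=
          intervalIntegral.integral_mono_on_of_le_Ioo hyz.le intervalIntegrable_const (hsub hyI hz)
            fun u hu => hmono hy ⟨hy.1.trans hu.1, hu.2.trans_le hz.2⟩ hu.1.le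
  have ha : a ∈ Icc a b := left_mem_Icc.2 (hx.1.trans (hxy.trans hyz).le |>.trans hz.2)
  rw [intervalIntegral.integral_interval_sub_left (hsub ha hyI) (hsub ha hx),
    intervalIntegral.integral_interval_sub_left (hsub ha hz) (hsub ha hyI)]
  calc (∫ u in x..y, m u) / (y - x) ≤ m y := by rwa [div_le_iff₀ (sub_pos.2 hxy), mul_comm]
    _ ≤ (∫ u in y..z, m u) / (z - y) := by rwa [le_div_iff₀ (sub_pos.2 hyz), mul_comm]

theorem quantile_add_div_le {F : ℝ → ℝ} {L : ℝ} (hL : 0 < L)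
    (hbot : Tendsto F atBot (nhds 0)) (htop : Tendsto F atTop (nhds 1))
    (hlip : ∀ s t : ℝ, |F s - F t| ≤ L * |s - t|)
    {s t : ℝ} (hs : 0 < s) (ht : t < 1) (hst : s ≤ t) :
    quantile F s + (t - s) / L ≤ quantile F t := by
  have hne : {x | t ≤ F x}.Nonempty :=
    ((htop.eventually (eventually_gt_nhds ht)).exists).imp fun _ hx => hx.le
  have hbdd : BddBelow {x | s ≤ F x} := by
    obtain ⟨N, hN⟩ := eventually_atBot.1 (hbot.eventually (eventually_lt_nhds hs))
    exact ⟨N, fun x hx => not_lt.1 fun hxN => (hN x hxN.le).not_ge hx⟩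
  unfold quantile
  refine le_csInf hne fun x (hx : t ≤ F x) => ?_
  rw [← le_sub_iff_add_le]
  refine csInf_le hbdd ?_
  -- Moving left by `(t - s) / L` lowers an `L`-Lipschitz `F` by at most `t - s`.
  have hd : 0 ≤ (t - s) / L := div_nonneg (sub_nonneg.2 hst) hL.le
  have h := hlip x (x - (t - s) / L)
  rw [sub_sub_cancel, abs_of_nonneg hd, mul_div_cancel₀ _ hL.ne'] at h
  show s ≤ F (x - (t - s) / L)
  linarith [le_abs_self (F x - F (x - (t - s) / L))]

theorem convexOn_neg_integral_quantile_sub_sq {F : ℝ → ℝ} {L : ℝ} (hL : 0 < L)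
    (hbot : Tendsto F atBot (nhds 0)) (htop : Tendsto F atTop (nhds 1))
    (hlip : ∀ s t : ℝ, |F s - F t| ≤ L * |s - t|)
    (hq : IntervalIntegrable (quantile F) volume 0 1) :
    ConvexOn ℝ (Icc 0 1) (fun x => -(∫ t in (1 - x)..1, quantile F t) - x ^ 2 / (2 * L)) := by
  have hq' : IntervalIntegrable (fun u => quantile F (1 - u)) volume 0 1 := by
    simpa using (hq.comp_sub_left 1).symm
  have hlin : ∀ a b, IntervalIntegrable (fun u : ℝ => u / L) volume a b :=
    (continuous_id.div_const L).intervalIntegrable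
  have hmono : MonotoneOn (fun u => -quantile F (1 - u) - u / L) (Ioo 0 1) := by
    intro u hu v hv huv
    have h := quantile_add_div_le hL hbot htop hlip (s := 1 - v) (t := 1 - u)
      (by linarith [hv.2]) (by linarith [hu.1]) (by linarith)
    rw [show (1 - u - (1 - v)) / L = v / L - u / L by ring] at h
    dsimp only
    linarith
  refine (convexOn_primitive_of_monotoneOn (hq'.neg.sub (hlin 0 1)) hmono).congr fun x hx => ?_
  have hqx : IntervalIntegrable (fun u => quantile F (1 - u)) volume 0 x :=
    hq'.mono_set (uIcc_subset_uIcc left_mem_uIcc (mem_uIcc_of_le hx.1 hx.2))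
  beta_reduce
  rw [intervalIntegral.integral_sub hqx.neg (hlin 0 x)]
  simp only [Pi.neg_apply]
  rw [intervalIntegral.integral_neg,
    intervalIntegral.integral_comp_sub_left (quantile F) 1, intervalIntegral.integral_div,
    integral_id, sub_zero]
  ring

theorem stmt15_general (K : ℕ) (L : ℝ) (hL : 0 < L) (F : Fin K → ℝ → ℝ)
    (hbot : ∀ k, Tendsto (F k) atBot (nhds 0))
    (htop : ∀ k, Tendsto (F k) atTop (nhds 1))
    (hlip : ∀ k, ∀ s t : ℝ, |F k s - F k t| ≤ L * |s - t|)
    (hint : ∀ k, IntegrableOn (quantile (F k)) (Ioo (0:ℝ) 1)) :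
    ConvexOn ℝ (Icc (0 : Fin K → ℝ) 1) (reg F) ∧
    ContinuousOn (reg F) (Icc (0 : Fin K → ℝ) 1) ∧
    ConvexOn ℝ (Icc (0 : Fin K → ℝ) 1)
      (fun p => reg F p - (∑ k, (p k) ^ 2) / (2 * L)) := by
  have hunit : uIcc (0 : ℝ) 1 = Icc 0 1 := uIcc_of_le zero_le_one
  have hq : ∀ k, IntegrableOn (quantile (F k)) (uIcc 0 1) := fun k => by
    rw [hunit, integrableOn_Icc_iff_integrableOn_Ioo]
    exact hint k
  have hcube : Icc (0 : Fin K → ℝ) 1 = univ.pi fun _ => Icc 0 1 := (pi_univ_Icc 0 1).symm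
  have hstrong : ConvexOn ℝ (Icc (0 : Fin K → ℝ) 1)
      (fun p => reg F p - (∑ k, (p k) ^ 2) / (2 * L)) := by
    rw [hcube]
    refine (convexOn_sum_apply (convex_Icc 0 1) fun k => convexOn_neg_integral_quantile_sub_sq hL
      (hbot k) (htop k) (hlip k) (hq k).intervalIntegrable).congr fun p _ => ?_
    simp only [reg, Finset.sum_div, Finset.sum_sub_distrib, Finset.sum_neg_distrib]
  have hsq : ConvexOn ℝ (Icc (0 : Fin K → ℝ) 1) (fun p => (∑ k, (p k) ^ 2) / (2 * L)) := by
    rw [hcube]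
    refine (convexOn_sum_apply (convex_Icc 0 1) fun _ =>
      ((even_two.convexOn_pow.subset (subset_univ _) (convex_Icc 0 1)).smul
        (inv_nonneg.2 (by positivity : (0 : ℝ) ≤ 2 * L)))).congr fun p _ => ?_
    simp only [smul_eq_mul, div_eq_inv_mul, Finset.mul_sum]
  have hcont : ContinuousOn (reg F) (Icc (0 : Fin K → ℝ) 1) := by
    refine (continuousOn_finsetSum _ fun k _ => ?_).neg
    refine (intervalIntegral.continuousOn_primitive_interval_left (hq k)).comp
      (continuous_const.sub (continuous_apply k)).continuousOn fun p hp => ?_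
    rw [hunit]
    exact ⟨sub_nonneg.2 (hp.2 k), sub_le_self _ (hp.1 k)⟩
  exact ⟨(hstrong.add hsq).congr fun p _ => sub_add_cancel _ _, hcont, hstrong⟩

theorem stmt15 (K : ℕ) (hK : 1 ≤ K) (L : ℝ) (hL : 0 < L) (F : Fin K → ℝ → ℝ)
    (hmono : ∀ k, Monotone (F k))
    (h01 : ∀ k s, F k s ∈ Icc (0:ℝ) 1)
    (hbot : ∀ k, Tendsto (F k) atBot (nhds 0))
    (htop : ∀ k, Tendsto (F k) atTop (nhds 1))
    (hlip : ∀ k, ∀ s t : ℝ, |F k s - F k t| ≤ L * |s - t|)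
    (hint : ∀ k, IntegrableOn (quantile (F k)) (Ioo (0:ℝ) 1)) :
    ConvexOn ℝ (Icc (0 : Fin K → ℝ) 1) (reg F) ∧
    ContinuousOn (reg F) (Icc (0 : Fin K → ℝ) 1) ∧
    ConvexOn ℝ (Icc (0 : Fin K → ℝ) 1)
      (fun p => reg F p - (∑ k, (p k) ^ 2) / (2 * L)) :=
  stmt15_general K L hL F hbot htop hlip hint
end
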